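/- arXiv:1612.03375 — 12 statements merged into one kernel-verified Lean document; each statement's English description precedes it below -/
import Mathlib

section
/- There exist absolute constants 0 < c₁ ≤ c₂ such that for all integers L ≥ 1 and M ≥ L+1, c₁·L²/M ≤ log( binom(M+L+1, L+1)/binom(M, L+1) ) ≤ c₂·L²/M. -/
/-!
Writing `k = L + 1`, the ratio `binom(M+k, k) / binom(M, k)` is the product of the `k` factors
`1 + k / (M - j)`, `j < k`. By `log (1 + x) ≥ 2x / (x + 2)` each logarithm is at least `2k / (3M)`,
which gives the lower bound. For the upper bound, when `M ≥ 2L` each logarithm is at most `k / (M - L) ≤ 2k / M`;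
when `M < 2L` the ratio is at most `binom(M+k, k) ≤ 2 ^ (M + k)`, and `M + k ≤ 3L` is itself
of order `L² / M`.
-/

open Finset Real

lemma cast_sub_pos_of_mem_range {M k j : ℕ} (hk : k ≤ M) (hj : j ∈ range k) : (0 : ℝ) < M - j := by
  have : (j : ℝ) < M := by exact_mod_cast (mem_range.1 hj).trans_le hk
  linarith

lemma cast_choose_add_div_cast_choose {M k : ℕ} (hk : k ≤ M) :
    ((M + k).choose k : ℝ) / M.choose k = ∏ j ∈ range k, (1 + k / ((M : ℝ) - j)) := by
  rw [Nat.cast_choose_eq_descPochhammer_div, Nat.cast_choose_eq_descPochhammer_div,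
    descPochhammer_eval_eq_prod_range, descPochhammer_eval_eq_prod_range,
    div_div_div_cancel_right₀ (by positivity), ← prod_div_distrib]
  refine prod_congr rfl fun j hj => ?_
  have := cast_sub_pos_of_mem_range hk hj
  field_simp
  push_cast
  ring

lemma log_cast_choose_add_div_cast_choose {M k : ℕ} (hk : k ≤ M) :
    log (((M + k).choose k : ℝ) / M.choose k) = ∑ j ∈ range k, log (1 + k / ((M : ℝ) - j)) := by
  rw [cast_choose_add_div_cast_choose hk, log_prod]
  intro j hj
  have := cast_sub_pos_of_mem_range hk hj
  positivity

lemma two_mul_div_three_mul_le_log_one_add_div {k d M : ℝ} (hk : 0 ≤ k) (hkM : k ≤ M)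
    (hd : 0 < d) (hdM : d ≤ M) : 2 * k / (3 * M) ≤ log (1 + k / d) :=
  calc 2 * k / (3 * M) ≤ 2 * (k / d) / (k / d + 2) := by
        rw [div_le_div_iff₀ (by linarith) (by positivity)]
        field_simp
        nlinarith
    _ ≤ log (1 + k / d) := le_log_one_add_of_nonneg (by positivity)

lemma two_mul_sq_div_le_log_cast_choose_add_div_cast_choose {M k : ℕ} (hk : k ≤ M) :
    2 * (k : ℝ) ^ 2 / (3 * M) ≤ log (((M + k).choose k : ℝ) / M.choose k) := by
  rw [log_cast_choose_add_div_cast_choose hk]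
  calc 2 * (k : ℝ) ^ 2 / (3 * M) = ∑ _j ∈ range k, 2 * (k : ℝ) / (3 * M) := by
        rw [sum_const, card_range, nsmul_eq_mul]
        ring
    _ ≤ _ := by
        refine sum_le_sum fun j hj => ?_
        exact two_mul_div_three_mul_le_log_one_add_div (by positivity) (by exact_mod_cast hk)
          (cast_sub_pos_of_mem_range hk hj) (by linarith [(Nat.cast_nonneg j : (0 : ℝ) ≤ j)])

lemma log_cast_choose_add_div_cast_choose_le_sq_div {M k : ℕ} (hk : k ≤ M) :
    log (((M + k).choose k : ℝ) / M.choose k) ≤ (k : ℝ) ^ 2 / (M + 1 - k) := by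
  rw [log_cast_choose_add_div_cast_choose hk]
  calc ∑ j ∈ range k, log (1 + k / ((M : ℝ) - j)) ≤ ∑ _j ∈ range k, (k : ℝ) / (M + 1 - k) := by
        refine sum_le_sum fun j hj => ?_
        have hMj := cast_sub_pos_of_mem_range hk hj
        have hjk : (j : ℝ) + 1 ≤ k := by exact_mod_cast mem_range.1 hj
        have hkM : (k : ℝ) ≤ M := by exact_mod_cast hk
        calc log (1 + k / ((M : ℝ) - j)) ≤ k / ((M : ℝ) - j) := by
              linarith [log_le_sub_one_of_pos (by positivity : (0 : ℝ) < 1 + k / ((M : ℝ) - j))]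
          _ ≤ (k : ℝ) / (M + 1 - k) :=
              div_le_div_of_nonneg_left (by positivity) (by linarith) (by linarith)
    _ = (k : ℝ) ^ 2 / (M + 1 - k) := by
        rw [sum_const, card_range, nsmul_eq_mul]
        ring

lemma log_cast_choose_add_div_cast_choose_le_add {M k : ℕ} (hk : k ≤ M) :
    log (((M + k).choose k : ℝ) / M.choose k) ≤ M + k := by
  have hchoose : (1 : ℝ) ≤ M.choose k := by exact_mod_cast Nat.choose_pos hk
  have hlog_two : log 2 ≤ 1 := by linarith [log_le_sub_one_of_pos (by norm_num : (0 : ℝ) < 2)]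
  calc log (((M + k).choose k : ℝ) / M.choose k) ≤ log ((2 : ℝ) ^ (M + k)) := by
        gcongr
        · have := Nat.choose_pos (Nat.le_add_left k M)
          positivity
        · calc ((M + k).choose k : ℝ) / M.choose k ≤ (M + k).choose k :=
                div_le_self (by positivity) hchoose
            _ ≤ (2 : ℝ) ^ (M + k) := by exact_mod_cast Nat.choose_le_two_pow (M + k) k
    _ = (M + k) * log 2 := by rw [log_pow]; push_cast; ring
    _ ≤ M + k := by nlinarith [(Nat.cast_nonneg (M + k) : (0 : ℝ) ≤ (M + k : ℕ))]

/-- There exist absolute constants `0 < c₁ ≤ c₂` such that for all integers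
`L ≥ 1` and `M ≥ L+1`,
`c₁·L²/M ≤ log( binom(M+L+1,L+1)/binom(M,L+1) ) ≤ c₂·L²/M`. -/
theorem stmt1 : ∃ c₁ c₂ : ℝ, 0 < c₁ ∧ c₁ ≤ c₂ ∧
    ∀ L M : ℕ, 1 ≤ L → L + 1 ≤ M →
      c₁ * (L : ℝ) ^ 2 / M
          ≤ Real.log (((M + L + 1).choose (L + 1) : ℝ) / (M.choose (L + 1) : ℝ)) ∧
      Real.log (((M + L + 1).choose (L + 1) : ℝ) / (M.choose (L + 1) : ℝ))
          ≤ c₂ * (L : ℝ) ^ 2 / M := by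
  refine ⟨2 / 3, 8, by norm_num, by norm_num, fun L M hL hLM => ?_⟩
  rw [Nat.add_assoc]
  have hL' : (1 : ℝ) ≤ L := by exact_mod_cast hL
  have hLM' : (L : ℝ) + 1 ≤ M := by exact_mod_cast hLM
  have hM : (0 : ℝ) < M := by linarith
  refine ⟨?_, ?_⟩
  · refine le_trans ?_ (two_mul_sq_div_le_log_cast_choose_add_div_cast_choose hLM)
    rw [div_le_div_iff₀ hM (by positivity)]
    push_cast
    nlinarith
  · rcases le_or_gt (2 * L) M with hlarge | hsmall
    · have hlarge' : 2 * (L : ℝ) ≤ M := by exact_mod_cast hlarge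
      refine (log_cast_choose_add_div_cast_choose_le_sq_div hLM).trans ?_
      rw [div_le_div_iff₀ (by push_cast; linarith) hM]
      push_cast
      have hsq : ((L : ℝ) + 1) ^ 2 ≤ 4 * L ^ 2 := by nlinarith
      nlinarith [mul_nonneg (sq_nonneg (L : ℝ)) (sub_nonneg.2 hlarge'),
        mul_le_mul_of_nonneg_right hsq hM.le]
    · have hsmall' : (M : ℝ) + 1 ≤ 2 * L := by exact_mod_cast hsmall
      refine (log_cast_choose_add_div_cast_choose_le_add hLM).trans ?_
      rw [le_div_iff₀ hM]
      push_cast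
      nlinarith
end

section
/- For all integers L ≥ 0 and M ≥ L+1, the identity Σ_{m=0}^{L} ((2m+1)/M)·∏_{j=1}^{m} (M+j)/(M−j) = binom(M+L+1, L+1)/binom(M, L+1) − 1 holds (the product over an empty index set is 1). -/
/-!
Write `P m = ∏_{j=1}^m (x+j)/(x-j)` and `T m = (x+m+1)/x · P m`. Since `P m = P (m-1) · (x+m)/(x-m)`,
the summand `(2m+1)/x · P m` is `T m - T (m-1)`, with `T (-1) = 1`, so the sum telescopes to `T L - 1`.
On the other side, `binom(M+L+1, L+1) / binom(M, L+1)` is the ratio of the rising factorial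
`(M+1)⋯(M+L+1)` to the falling factorial `M(M-1)⋯(M-L)`, which is `T L` at `x = M`.
-/

open Finset

theorem prod_Icc_one_eq_prod_range {M : Type*} [CommMonoid M] (f : ℕ → M) (k : ℕ) :
    ∏ j ∈ Icc 1 k, f j = ∏ i ∈ range k, f (i + 1) := by
  induction k with
  | zero => simp
  | succ k ih => rw [prod_Icc_succ_top (by omega), prod_range_succ, ih]

theorem Nat.cast_ascFactorial_eq_prod_Icc {R : Type*} [CommSemiring R] (n k : ℕ) :
    ((n + 1).ascFactorial k : R) = ∏ j ∈ Icc 1 k, ((n : R) + j) := by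
  rw [ascFactorial_eq_prod_range, prod_Icc_one_eq_prod_range]
  push_cast
  ring_nf

theorem Nat.cast_descFactorial_succ_eq_mul_prod_Icc {R : Type*} [CommRing R] (n k : ℕ) :
    (n.descFactorial (k + 1) : R) = n * ∏ j ∈ Icc 1 k, ((n : R) - j) := by
  rw [← descPochhammer_eval_eq_descFactorial, descPochhammer_eval_eq_prod_range, prod_range_succ',
    prod_Icc_one_eq_prod_range]
  push_cast
  ring

theorem Nat.cast_choose_add_succ_div_cast_choose {K : Type*} [Field K] [CharZero K] (n k : ℕ) :
    ((n + k + 1).choose (k + 1) : K) / n.choose (k + 1)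
      = (n + k + 1) / n * ∏ j ∈ Icc 1 k, ((n : K) + j) / (n - j) := by
  have hfac : ((k + 1).factorial : K) ≠ 0 := by exact_mod_cast (k + 1).factorial_ne_zero
  have hasc : ((n + 1).ascFactorial (k + 1) : K) = (k + 1).factorial * (n + k + 1).choose (k + 1) := by
    exact_mod_cast Nat.ascFactorial_eq_factorial_mul_choose n (k + 1)
  have hdesc : (n.descFactorial (k + 1) : K) = (k + 1).factorial * n.choose (k + 1) := by
    exact_mod_cast Nat.descFactorial_eq_factorial_mul_choose n (k + 1)
  rw [← mul_div_mul_left _ _ hfac, ← hasc, ← hdesc, Nat.cast_ascFactorial_eq_prod_Icc,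
    prod_Icc_succ_top (by omega), Nat.cast_descFactorial_succ_eq_mul_prod_Icc, prod_div_distrib,
    mul_comm, mul_div_mul_comm]
  push_cast
  ring

theorem sum_range_mul_prod_Icc_div {K : Type*} [Field K] (x : K) (L : ℕ) (hx : ∀ j ≤ L, x ≠ j) :
    ∑ m ∈ range (L + 1), (2 * m + 1) / x * ∏ j ∈ Icc 1 m, (x + j) / (x - j)
      = (x + L + 1) / x * ∏ j ∈ Icc 1 L, (x + j) / (x - j) - 1 := by
  have hx0 : x ≠ 0 := by simpa using hx 0 (Nat.zero_le L)
  induction L with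
  | zero =>
    simp only [zero_add, sum_range_one, Nat.cast_zero, Icc_eq_empty_of_lt zero_lt_one, prod_empty]
    field_simp
    ring
  | succ L ih =>
    have hxL : x - (L + 1) ≠ 0 := sub_ne_zero.2 (by exact_mod_cast hx (L + 1) le_rfl)
    rw [sum_range_succ, ih fun j hj => hx j (by omega), prod_Icc_succ_top (by omega)]
    push_cast
    field_simp
    ring

/-- For integers `L ≥ 0` and `M ≥ L+1`,
`Σ_{m=0}^{L} ((2m+1)/M)·∏_{j=1}^{m} (M+j)/(M−j) = binom(M+L+1,L+1)/binom(M,L+1) − 1`,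
as an identity of rational numbers (the empty product is `1`). -/
theorem stmt2 (L M : ℕ) (hM : L + 1 ≤ M) :
    ∑ m ∈ Finset.range (L + 1),
        ((2 * (m : ℚ) + 1) / M) * ∏ j ∈ Finset.Icc 1 m, (((M : ℚ) + j) / ((M : ℚ) - j))
      = ((M + L + 1).choose (L + 1) : ℚ) / (M.choose (L + 1) : ℚ) - 1 := by
  rw [Nat.cast_choose_add_succ_div_cast_choose, sum_range_mul_prod_Icc_div]
  intro j hj
  exact_mod_cast (by omega : M ≠ j)
end

section
/- For all integers M ≥ 1 and 0 ≤ m ≤ M−1, the discrete Chebyshev polynomial satisfies t_m(−1) = (−1)^m · ∏_{j=1}^{m} (M+j). -/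
open Finset

/-- The polynomial `p_m(x) = x(x−1)⋯(x−m+1)·(x−M)(x−M−1)⋯(x−M−m+1)`, as a real function. -/
noncomputable def discreteChebP (M m : ℕ) (x : ℝ) : ℝ :=
  (∏ i ∈ Finset.range m, (x - i)) * ∏ i ∈ Finset.range m, (x - M - i)

/-- The discrete Chebyshev polynomial
`t_m(x) = (1/m!)·Σ_{j=0}^{m} (−1)^j·binom(m,j)·p_m(x+m−j)`, as a real function. -/
noncomputable def discreteChebT (M m : ℕ) (x : ℝ) : ℝ :=
  (1 / (m.factorial : ℝ)) *
    ∑ j ∈ Finset.range (m + 1), (-1 : ℝ) ^ j * (m.choose j : ℝ) * discreteChebP M m (x + m - j)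

/-!
Evaluating `t_m` at `−1`, the shifted arguments `−1 + m − j` are the integers `m − 1 − j`,
which for `j < m` are roots of the factor `x(x−1)⋯(x−m+1)` of `p_m`. Only the term `j = m`
survives, and `p_m(−1) = (−1)^m m! · (−1)^m ∏_{j=1}^m (M+j)`.
-/

theorem prod_range_neg_one_sub_sub {R : Type*} [CommRing R] (a : R) (n : ℕ) :
    ∏ i ∈ range n, (-1 - a - i) = (-1) ^ n * ∏ j ∈ Icc 1 n, (a + j) := by
  induction n with
  | zero => simp
  | succ n ih =>
    rw [prod_range_succ, ih, prod_Icc_succ_top (by omega)]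
    push_cast
    ring

theorem prod_range_neg_one_sub {R : Type*} [CommRing R] (n : ℕ) :
    ∏ i ∈ range n, (-1 - (i : R)) = (-1) ^ n * n.factorial := by
  rw [← prod_Ico_id_eq_factorial, Ico_add_one_right_eq_Icc, Nat.cast_prod]
  simpa using prod_range_neg_one_sub_sub (0 : R) n

theorem discreteChebP_natCast_of_lt (M : ℕ) {m k : ℕ} (hk : k < m) :
    discreteChebP M m k = 0 := by
  rw [discreteChebP, prod_eq_zero (mem_range.mpr hk) (sub_self _), zero_mul]

theorem discreteChebP_neg_one (M m : ℕ) :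
    discreteChebP M m (-1) = m.factorial * ∏ j ∈ Icc 1 m, ((M : ℝ) + j) := by
  rw [discreteChebP, prod_range_neg_one_sub, prod_range_neg_one_sub_sub,
    mul_mul_mul_comm, ← mul_assoc, ← mul_pow]
  norm_num

theorem stmt3_general (M m : ℕ) :
    discreteChebT M m (-1) = (-1 : ℝ) ^ m * ∏ j ∈ Finset.Icc 1 m, ((M : ℝ) + j) := by
  have lower_terms_vanish : ∀ j ∈ range m,
      (-1 : ℝ) ^ j * m.choose j * discreteChebP M m (-1 + m - j) = 0 := by
    intro j hj
    have hjm : j < m := mem_range.mp hj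
    have harg : (-1 + m - j : ℝ) = (m - 1 - j : ℕ) := by
      rw [Nat.cast_sub (by omega), Nat.cast_sub (by omega)]
      push_cast
      ring
    rw [harg, discreteChebP_natCast_of_lt M (by omega), mul_zero]
  have hfac : (m.factorial : ℝ) ≠ 0 := Nat.cast_ne_zero.mpr m.factorial_ne_zero
  rw [discreteChebT, sum_range_succ, sum_eq_zero lower_terms_vanish, Nat.choose_self,
    show (-1 + m - m : ℝ) = -1 by ring, discreteChebP_neg_one]
  field_simp
  ring

/-- For all integers `M ≥ 1` and `0 ≤ m ≤ M−1`,
`t_m(−1) = (−1)^m · ∏_{j=1}^{m} (M+j)`. -/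
theorem stmt3 (M m : ℕ) (hM : 1 ≤ M) (hm : m + 1 ≤ M) :
    discreteChebT M m (-1) = (-1 : ℝ) ^ m * ∏ j ∈ Finset.Icc 1 m, ((M : ℝ) + j) :=
  stmt3_general M m
end

section
/- For all integers L ≥ 1 and M ≥ L+1 and every vector w ∈ ℝ^{L+1}, one has ‖B̄w‖₂ ≥ √M · (1/(L²·2^{7L}·(2L+1))) · ((M+L)/(eM))^{L+1/2} · ‖w‖₂; equivalently, the smallest singular value of B̄/√M is at least (1/(L²·2^{7L}·(2L+1)))·((M+L)/(eM))^{L+1/2}. -/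
/-!
Write `p(x) = ∑ⱼ wⱼ xʲ`, so that `‖B̄w‖₂² = ∑ᵢ p((i+1)/M)²`. With `q = ⌊M/(L+1)⌋` the grid
contains the `q` disjoint families of `L+1` equispaced nodes `(g+1)/M + k·q/M`, `0 ≤ k ≤ L`, all in
`(0, 1]`. On each family, Lagrange interpolation writes `wⱼ = ∑ₖ p(xₖ) · coeffⱼ(ℓₖ)`. Since the
nodes lie in `[-1, 1]`, `|coeffⱼ(ℓₖ)| ≤ 2^L / ∏_{m ≠ k} |xₖ - xₘ| = 2^L / (k! (L-k)! (q/M)^L)`,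
which is at most `4^L / (L! (q/M)^L)`. Cauchy–Schwarz then bounds `‖w‖²` by `(L+1)²` times the
square of this bound times the sum of `p²` over the family. Summing over the `q` families and
using `M ≤ 2(L+1)q` and `(L+1)^L ≤ e^{L+1} L!` gives the stated constant.
-/

open Finset Polynomial Nat

theorem abs_coeff_prod_X_sub_C_le {ι : Type*} (s : Finset ι) (v : ι → ℝ)
    (hv : ∀ i ∈ s, |v i| ≤ 1) (j : ℕ) : |(∏ i ∈ s, (X - C (v i))).coeff j| ≤ 2 ^ #s := by
  classical
  induction s using Finset.induction_on generalizing j with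
  | empty => rcases j with _ | j <;> simp [coeff_one]
  | insert a s ha ih =>
    set r := ∏ i ∈ s, (X - C (v i))
    have hr : ∀ j, |r.coeff j| ≤ 2 ^ #s := ih fun i hi ↦ hv i (mem_insert_of_mem hi)
    have hXr : |(X * r).coeff j| ≤ 2 ^ #s := by
      rcases j with _ | j
      · simp
      · rw [coeff_X_mul]; exact hr j
    rw [prod_insert ha, card_insert_of_notMem ha, sub_mul, coeff_sub, coeff_C_mul]
    calc _ ≤ |(X * r).coeff j| + |v a| * |r.coeff j| := (abs_sub _ _).trans_eq (by rw [abs_mul])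
      _ ≤ 2 ^ #s + 1 * 2 ^ #s := by gcongr; exacts [hv a (mem_insert_self a s), hr j]
      _ = 2 ^ (#s + 1) := by ring

theorem prod_erase_range_abs_sub {k n : ℕ} (hkn : k ≤ n) :
    ∏ m ∈ (range (n + 1)).erase k, |(k : ℝ) - m| = k ! * (n - k)! := by
  induction n, hkn using Nat.le_induction with
  | base =>
    rw [range_add_one, erase_insert notMem_range_self, Nat.sub_self, factorial_zero, cast_one,
      mul_one, ← descFactorial_self, descFactorial_eq_prod_range, cast_prod]
    refine prod_congr rfl fun m hm ↦ ?_
    have hmk : m ≤ k := (mem_range.1 hm).le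
    rw [cast_sub hmk, abs_of_nonneg (sub_nonneg.2 (by exact_mod_cast hmk))]
  | succ n hkn ih =>
    rw [range_add_one, erase_insert_of_ne (by omega), prod_insert (by simp), ih,
      Nat.succ_sub hkn, factorial_succ,
      abs_of_nonpos (by push_cast; linarith [(cast_le (α := ℝ)).2 hkn])]
    push_cast [hkn]
    ring

theorem Nat.factorial_le_two_pow_mul {k n : ℕ} (hkn : k ≤ n) : n ! ≤ 2 ^ n * (k ! * (n - k)!) := by
  rw [← choose_mul_factorial_mul_factorial hkn, mul_assoc]
  exact Nat.mul_le_mul_right _ (choose_le_two_pow n k)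

namespace Lagrange

theorem abs_coeff_basis_le {ι : Type*} [DecidableEq ι] {s : Finset ι} {v : ι → ℝ}
    (hv : ∀ i ∈ s, |v i| ≤ 1) (i : ι) (j : ℕ) :
    |(Lagrange.basis s v i).coeff j| ≤ 2 ^ #(s.erase i) / ∏ m ∈ s.erase i, |v i - v m| := by
  have hbasis : Lagrange.basis s v i
      = C (∏ m ∈ s.erase i, (v i - v m)⁻¹) * ∏ m ∈ s.erase i, (X - C (v m)) := by
    rw [Lagrange.basis, map_prod, ← prod_mul_distrib]; rfl
  rw [hbasis, coeff_C_mul, abs_mul, abs_prod, div_eq_inv_mul, ← prod_inv_distrib]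
  simp_rw [abs_inv]
  exact mul_le_mul_of_nonneg_left
    (abs_coeff_prod_X_sub_C_le _ _ (fun m hm ↦ hv m (mem_of_mem_erase hm)) j) (by positivity)

theorem sum_sq_coeff_le_of_abs_coeff_basis_le {ι : Type*} [DecidableEq ι] {s : Finset ι}
    {v : ι → ℝ} (hvs : Set.InjOn v s) {p : ℝ[X]} (hp : p.degree < #s) {D : ℝ}
    (hD : ∀ i ∈ s, ∀ j, |(Lagrange.basis s v i).coeff j| ≤ D) (n : ℕ) :
    ∑ j ∈ range n, p.coeff j ^ 2 ≤ n * #s * D ^ 2 * ∑ i ∈ s, p.eval (v i) ^ 2 := by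
  have hcoeff (j : ℕ) : p.coeff j = ∑ i ∈ s, p.eval (v i) * (Lagrange.basis s v i).coeff j := by
    conv_lhs => rw [Lagrange.eq_interpolate hvs hp]
    simp only [Lagrange.interpolate_apply, finsetSum_coeff, coeff_C_mul]
  have hsq (j : ℕ) : p.coeff j ^ 2 ≤ #s * D ^ 2 * ∑ i ∈ s, p.eval (v i) ^ 2 := by
    calc p.coeff j ^ 2
        ≤ (∑ i ∈ s, p.eval (v i) ^ 2) * ∑ i ∈ s, (Lagrange.basis s v i).coeff j ^ 2 := by
          rw [hcoeff]; exact sum_mul_sq_le_sq_mul_sq _ _ _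
      _ ≤ (∑ i ∈ s, p.eval (v i) ^ 2) * ∑ _i ∈ s, D ^ 2 := by
          refine mul_le_mul_of_nonneg_left (sum_le_sum fun i hi ↦ ?_) (by positivity)
          exact sq_le_sq' (abs_le.1 (hD i hi j)).1 (abs_le.1 (hD i hi j)).2
      _ = #s * D ^ 2 * ∑ i ∈ s, p.eval (v i) ^ 2 := by rw [sum_const, nsmul_eq_mul]; ring
  calc ∑ j ∈ range n, p.coeff j ^ 2
      ≤ ∑ _j ∈ range n, #s * D ^ 2 * ∑ i ∈ s, p.eval (v i) ^ 2 := sum_le_sum fun j _ ↦ hsq j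
    _ = n * #s * D ^ 2 * ∑ i ∈ s, p.eval (v i) ^ 2 := by
      rw [sum_const, card_range, nsmul_eq_mul]; ring

theorem abs_coeff_basis_equispaced_le {n : ℕ} {a δ : ℝ} (hδ : 0 < δ)
    (hv : ∀ k ∈ range (n + 1), |a + k * δ| ≤ 1) {k : ℕ} (hk : k ∈ range (n + 1)) (j : ℕ) :
    |(Lagrange.basis (range (n + 1)) (fun k : ℕ ↦ a + k * δ) k).coeff j|
      ≤ 4 ^ n / (n ! * δ ^ n) := by
  have hkn : k ≤ n := Nat.lt_succ_iff.1 (mem_range.1 hk)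
  have hcard : #((range (n + 1)).erase k) = n := by simp [card_erase_of_mem hk]
  have hprod : ∏ m ∈ (range (n + 1)).erase k, |(a + k * δ) - (a + m * δ)|
      = k ! * (n - k)! * δ ^ n := by
    simp_rw [show ∀ m : ℕ, a + k * δ - (a + m * δ) = (k - m) * δ from fun m ↦ by ring,
      abs_mul, abs_of_pos hδ, prod_mul_distrib, prod_const, hcard, prod_erase_range_abs_sub hkn]
  refine (abs_coeff_basis_le hv k j).trans ?_
  rw [hcard, hprod, div_le_div_iff₀ (by positivity) (by positivity)]
  have hfac : (n ! : ℝ) ≤ 2 ^ n * (k ! * (n - k)!) := by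
    exact_mod_cast Nat.factorial_le_two_pow_mul hkn
  calc 2 ^ n * (n ! * δ ^ n) ≤ 2 ^ n * (2 ^ n * (k ! * (n - k)!) * δ ^ n) := by gcongr
    _ = 4 ^ n * (k ! * (n - k)! * δ ^ n) := by
      rw [show (4 : ℝ) = 2 * 2 by norm_num, mul_pow]; ring

theorem sum_sq_coeff_le_sum_sq_eval_equispaced {n : ℕ} {p : ℝ[X]} (hp : p.degree < n + 1)
    {a δ : ℝ} (hδ : 0 < δ) (hv : ∀ k ∈ range (n + 1), |a + k * δ| ≤ 1) :
    ∑ j ∈ range (n + 1), p.coeff j ^ 2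
      ≤ (n + 1) ^ 2 * (4 ^ n / (n ! * δ ^ n)) ^ 2
        * ∑ k ∈ range (n + 1), p.eval (a + k * δ) ^ 2 := by
  have hinj : Set.InjOn (fun k : ℕ ↦ a + k * δ) (range (n + 1)) := fun k _ m _ h ↦ by
    simpa [hδ.ne'] using h
  have := sum_sq_coeff_le_of_abs_coeff_basis_le hinj (by simpa using hp)
    (fun k hk ↦ abs_coeff_basis_equispaced_le hδ hv hk) (n + 1)
  simpa [sq] using this

end Lagrange

theorem sum_range_mul_eq_sum_sum {M : Type*} [AddCommMonoid M] (f : ℕ → M) (n q : ℕ) :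
    ∑ i ∈ range (n * q), f i = ∑ k ∈ range n, ∑ g ∈ range q, f (k * q + g) := by
  induction n with
  | zero => simp
  | succ n ih => rw [Nat.succ_mul, sum_range_add, ih, sum_range_succ]

theorem mul_sum_sq_coeff_le_sum_sq_eval_grid {L q M : ℕ} {p : ℝ[X]} (hp : p.degree < L + 1)
    (hq : 0 < q) (hqM : (L + 1) * q ≤ M) :
    q * ∑ j ∈ range (L + 1), p.coeff j ^ 2
      ≤ (L + 1) ^ 2 * (4 ^ L / (L ! * ((q : ℝ) / M) ^ L)) ^ 2
        * ∑ i ∈ range M, p.eval ((i + 1 : ℝ) / M) ^ 2 := by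
  set f : ℕ → ℝ := fun i ↦ p.eval ((i + 1 : ℝ) / M) ^ 2
  set C : ℝ := (L + 1) ^ 2 * (4 ^ L / (L ! * ((q : ℝ) / M) ^ L)) ^ 2
  have hM : (0 : ℝ) < M := by exact_mod_cast (by nlinarith : 0 < M)
  have hrow (g : ℕ) (hg : g ∈ range q) :
      ∑ j ∈ range (L + 1), p.coeff j ^ 2 ≤ C * ∑ k ∈ range (L + 1), f (k * q + g) := by
    have hnode (k : ℕ) : (g + 1 : ℝ) / M + k * (q / M) = (((k * q + g : ℕ) : ℝ) + 1) / M := by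
      push_cast; field_simp; ring
    have hv : ∀ k ∈ range (L + 1), |(g + 1 : ℝ) / M + k * (q / M)| ≤ 1 := by
      intro k hk
      rw [hnode, abs_of_nonneg (by positivity), div_le_one hM]
      have hkL := mem_range.1 hk
      have hgq := mem_range.1 hg
      have : k * q + g + 1 ≤ M := by nlinarith
      exact_mod_cast this
    simpa only [hnode] using Lagrange.sum_sq_coeff_le_sum_sq_eval_equispaced hp (by positivity) hv
  calc (q : ℝ) * ∑ j ∈ range (L + 1), p.coeff j ^ 2
      = ∑ _g ∈ range q, ∑ j ∈ range (L + 1), p.coeff j ^ 2 := by simp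
    _ ≤ ∑ g ∈ range q, C * ∑ k ∈ range (L + 1), f (k * q + g) := sum_le_sum hrow
    _ = C * ∑ i ∈ range ((L + 1) * q), f i := by
      rw [← mul_sum, sum_range_mul_eq_sum_sum, sum_comm]
    _ ≤ C * ∑ i ∈ range M, f i := by gcongr

theorem succ_pow_le_exp_one_pow_mul_factorial (n : ℕ) :
    ((n : ℝ) + 1) ^ n ≤ Real.exp 1 ^ (n + 1) * n ! := by
  have h := Real.pow_div_factorial_le_exp (x := (n : ℝ) + 1) (by positivity) (n + 1)
  rw [div_le_iff₀ (by positivity), factorial_succ] at h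
  rw [Real.exp_one_pow]
  push_cast at h ⊢
  refine le_of_mul_le_mul_right ?_ (by positivity : (0 : ℝ) < n + 1)
  calc ((n : ℝ) + 1) ^ n * (n + 1) = (n + 1) ^ (n + 1) := (pow_succ _ _).symm
    _ ≤ _ := h
    _ = _ := by ring

theorem four_mul_exp_one_mul_le {L : ℕ} (hL : 1 ≤ L) :
    4 * Real.exp 1 * ((L : ℝ) + 1) ^ 3 ≤ (L : ℝ) ^ 4 * 2 ^ (6 * L) * (2 * L + 1) ^ 2 := by
  have hl : (1 : ℝ) ≤ L := by exact_mod_cast hL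
  set l : ℝ := (L : ℝ)
  have h64 : (64 : ℝ) ≤ 2 ^ (6 * L) :=
    calc (64 : ℝ) = 2 ^ 6 := by norm_num
      _ ≤ 2 ^ (6 * L) := pow_le_pow_right₀ (by norm_num) (by omega)
  have hcube : (l + 1) ^ 3 ≤ 8 * l ^ 4 := by
    calc (l + 1) ^ 3 ≤ (2 * l) ^ 3 := by gcongr; linarith
      _ = 8 * l ^ 3 * 1 := by ring
      _ ≤ 8 * l ^ 3 * l := by gcongr
      _ = 8 * l ^ 4 := by ring
  have h9 : (9 : ℝ) ≤ (2 * l + 1) ^ 2 := by nlinarith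
  calc 4 * Real.exp 1 * (l + 1) ^ 3 ≤ 4 * 3 * (8 * l ^ 4) := by
        gcongr; exact Real.exp_one_lt_three.le
    _ ≤ l ^ 4 * 64 * 9 := by nlinarith [pow_pos (by positivity : (0 : ℝ) < l) 4]
    _ ≤ l ^ 4 * 2 ^ (6 * L) * (2 * l + 1) ^ 2 := by gcongr

theorem sampling_constant_bound {L q M : ℕ} (hL : 1 ≤ L) (hq : 1 ≤ q)
    (hMq : M ≤ 2 * ((L + 1) * q)) :
    ((M : ℝ) + L) ^ (2 * L + 1) * ((L + 1) ^ 2 * 16 ^ L)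
      ≤ Real.exp 1 ^ (2 * L + 1) * ((L : ℝ) ^ 2 * 2 ^ (7 * L) * (2 * L + 1)) ^ 2
        * (L ! ^ 2 * q ^ (2 * L + 1)) := by
  set E := Real.exp 1
  have hML : (M : ℝ) + L ≤ 4 * (L + 1) * q := by
    have : (M : ℝ) ≤ 2 * ((L + 1) * q) := by exact_mod_cast hMq
    have : (1 : ℝ) ≤ q := by exact_mod_cast hq
    nlinarith
  have hpow : ((L : ℝ) + 1) ^ (2 * L) ≤ E ^ (2 * L + 2) * L ! ^ 2 := by
    calc ((L : ℝ) + 1) ^ (2 * L) = (((L : ℝ) + 1) ^ L) ^ 2 := by ring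
      _ ≤ (E ^ (L + 1) * L !) ^ 2 := by gcongr; exact succ_pow_le_exp_one_pow_mul_factorial L
      _ = E ^ (2 * L + 2) * L ! ^ 2 := by ring
  have h16 : (16 : ℝ) ^ L = 2 ^ (4 * L) := by rw [pow_mul]; norm_num
  have h4 : (4 : ℝ) ^ (2 * L + 1) = 4 * 16 ^ L := by rw [pow_succ, pow_mul]; norm_num; ring
  calc ((M : ℝ) + L) ^ (2 * L + 1) * ((L + 1) ^ 2 * 16 ^ L)
      ≤ (4 * (L + 1) * q) ^ (2 * L + 1) * ((L + 1) ^ 2 * 16 ^ L) := by gcongr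
    _ = 4 * 2 ^ (8 * L) * ((L : ℝ) + 1) ^ (2 * L) * (L + 1) ^ 3 * q ^ (2 * L + 1) := by
      rw [mul_pow, mul_pow, h4, h16]; ring
    _ ≤ 4 * 2 ^ (8 * L) * (E ^ (2 * L + 2) * L ! ^ 2) * (L + 1) ^ 3 * q ^ (2 * L + 1) := by
      gcongr
    _ = E ^ (2 * L + 1) * L ! ^ 2 * q ^ (2 * L + 1) * 2 ^ (8 * L) * (4 * E * (L + 1) ^ 3) := by
      ring
    _ ≤ E ^ (2 * L + 1) * L ! ^ 2 * q ^ (2 * L + 1) * 2 ^ (8 * L)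
          * ((L : ℝ) ^ 4 * 2 ^ (6 * L) * (2 * L + 1) ^ 2) := by
      exact mul_le_mul_of_nonneg_left (four_mul_exp_one_mul_le hL) (by positivity)
    _ = _ := by ring

theorem sampling_constant_le {L q M : ℕ} (hL : 1 ≤ L) (hq : 1 ≤ q) (hM : 0 < M)
    (hMq : M ≤ 2 * ((L + 1) * q)) :
    M * (1 / ((L : ℝ) ^ 2 * 2 ^ (7 * L) * (2 * L + 1))) ^ 2
        * (((M : ℝ) + L) / (Real.exp 1 * M)) ^ (2 * L + 1)
      * ((L + 1) ^ 2 * (4 ^ L / (L ! * ((q : ℝ) / M) ^ L)) ^ 2) ≤ q := by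
  have hM' : (0 : ℝ) < M := by exact_mod_cast hM
  have h16 : (4 : ℝ) ^ (L * 2) = 16 ^ L := by rw [mul_comm, pow_mul]; norm_num
  have key := sampling_constant_bound hL hq hMq
  simp only [div_pow, mul_pow, one_pow, ← pow_mul]
  field_simp
  rw [h16]
  -- both sides are now `M ^ (2 * L + 1)` times the sides of `key`
  refine (le_of_eq ?_).trans ((mul_le_mul_of_nonneg_left key (pow_nonneg hM'.le (2 * L + 1))).trans
    (le_of_eq ?_)) <;> ring

theorem sum_sq_eval_grid_ge {L M : ℕ} (hL : 1 ≤ L) (hM : L + 1 ≤ M) {p : ℝ[X]}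
    (hp : p.degree < L + 1) :
    M * (1 / ((L : ℝ) ^ 2 * 2 ^ (7 * L) * (2 * L + 1))) ^ 2
        * (((M : ℝ) + L) / (Real.exp 1 * M)) ^ (2 * L + 1) * ∑ j ∈ range (L + 1), p.coeff j ^ 2
      ≤ ∑ i ∈ range M, p.eval ((i + 1 : ℝ) / M) ^ 2 := by
  set q := M / (L + 1)
  have hq : 1 ≤ q := (Nat.one_le_div_iff (by omega)).2 hM
  have hqM : (L + 1) * q ≤ M := Nat.mul_div_le M (L + 1)
  have hMq : M ≤ 2 * ((L + 1) * q) := by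
    have hdiv : (L + 1) * q + M % (L + 1) = M := Nat.div_add_mod M (L + 1)
    have hmod := Nat.mod_lt M (by omega : 0 < L + 1)
    nlinarith
  have hsample := mul_sum_sq_coeff_le_sum_sq_eval_grid hp hq hqM
  have hconst := sampling_constant_le hL hq (by omega) hMq
  set A := M * (1 / ((L : ℝ) ^ 2 * 2 ^ (7 * L) * (2 * L + 1))) ^ 2
        * (((M : ℝ) + L) / (Real.exp 1 * M)) ^ (2 * L + 1)
  set C : ℝ := (L + 1) ^ 2 * (4 ^ L / (L ! * ((q : ℝ) / M) ^ L)) ^ 2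
  have hC : 0 < C := by
    have : (0 : ℝ) < q := by exact_mod_cast hq
    have : (0 : ℝ) < M := by exact_mod_cast (by omega : 0 < M)
    positivity
  refine le_of_mul_le_mul_right ?_ hC
  calc (A * ∑ j ∈ range (L + 1), p.coeff j ^ 2) * C
      = A * C * ∑ j ∈ range (L + 1), p.coeff j ^ 2 := by ring
    _ ≤ q * ∑ j ∈ range (L + 1), p.coeff j ^ 2 := by gcongr
    _ ≤ _ * C := by rw [mul_comm _ C]; exact hsample

theorem rpow_nat_add_half_sq {x : ℝ} (hx : 0 ≤ x) (n : ℕ) :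
    (x ^ ((n : ℝ) + 1 / 2)) ^ 2 = x ^ (2 * n + 1) := by
  rw [← Real.rpow_natCast _ 2, ← Real.rpow_mul hx, ← Real.rpow_natCast]
  push_cast
  ring_nf

/-- For integers `L ≥ 1`, `M ≥ L+1`, with `B̄` the `M × (L+1)` rectangular
Vandermonde matrix with entries `B̄_{i,j} = (i/M)^j` (`i = 1,…,M`, `j = 0,…,L`), every
`w ∈ ℝ^{L+1}` satisfies
`‖B̄w‖₂ ≥ √M · (1/(L²·2^{7L}·(2L+1))) · ((M+L)/(eM))^{L+1/2} · ‖w‖₂`;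
i.e. the smallest singular value of `B̄/√M` is at least
`(1/(L²·2^{7L}·(2L+1)))·((M+L)/(eM))^{L+1/2}`. -/
theorem stmt4 (L M : ℕ) (hL : 1 ≤ L) (hM : L + 1 ≤ M) (w : Fin (L + 1) → ℝ) :
    Real.sqrt (∑ i : Fin M,
        (∑ j : Fin (L + 1), ((i.1 + 1 : ℝ) / M) ^ (j.1 : ℕ) * w j) ^ 2)
      ≥ Real.sqrt M * (1 / ((L : ℝ) ^ 2 * 2 ^ (7 * L) * (2 * L + 1))) *
          (((M : ℝ) + L) / (Real.exp 1 * M)) ^ ((L : ℝ) + 1 / 2) *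
          Real.sqrt (∑ j : Fin (L + 1), w j ^ 2) := by
  set p := ofFn (L + 1) w
  have hS : ∑ j, w j ^ 2 = ∑ j ∈ range (L + 1), p.coeff j ^ 2 := by
    rw [← Fin.sum_univ_eq_sum_range (fun j ↦ p.coeff j ^ 2)]
    exact sum_congr rfl fun j _ ↦ by rw [ofFn_coeff_eq_val_of_lt _ j.isLt]
  have hT : ∑ i : Fin M, (∑ j : Fin (L + 1), ((i.1 + 1 : ℝ) / M) ^ (j.1 : ℕ) * w j) ^ 2
      = ∑ i ∈ range M, p.eval ((i + 1 : ℝ) / M) ^ 2 := by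
    rw [← Fin.sum_univ_eq_sum_range (fun i ↦ p.eval ((i + 1 : ℝ) / M) ^ 2)]
    simp [p, ofFn_eq_sum_monomial, eval_finsetSum, mul_comm]
  rw [hS, hT, ge_iff_le]
  refine Real.le_sqrt_of_sq_le ?_
  rw [mul_pow, mul_pow, mul_pow, Real.sq_sqrt (by positivity), Real.sq_sqrt (by positivity),
    rpow_nat_add_half_sq (by positivity)]
  exact sum_sq_eval_grid_ge hL hM (ofFn_degree_lt w)
end

section
/- For all integers M ≥ 2 and 1 ≤ m ≤ M−1 and all complex numbers z, the discrete Chebyshev polynomial satisfies |t_m(z)| ≤ m²·2^{6m}·sup_{0 ≤ ξ ≤ m} ( max(|z+ξ|, M) )^m, where the supremum is over real ξ ∈ [0, m]. -/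
open Finset

/-- The polynomial `p_m(x) = x(x−1)⋯(x−m+1)·(x−M)(x−M−1)⋯(x−M−m+1)` over `ℂ`. -/
noncomputable def discreteChebPC (M m : ℕ) (z : ℂ) : ℂ :=
  (∏ i ∈ Finset.range m, (z - i)) * ∏ i ∈ Finset.range m, (z - M - i)

/-- The discrete Chebyshev polynomial
`t_m(x) = (1/m!)·Σ_{j=0}^{m} (−1)^j·binom(m,j)·p_m(x+m−j)` over `ℂ`. -/
noncomputable def discreteChebTC (M m : ℕ) (z : ℂ) : ℂ :=
  (1 / (m.factorial : ℂ)) *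
    ∑ j ∈ Finset.range (m + 1), (-1 : ℂ) ^ j * (m.choose j : ℂ) * discreteChebPC M m (z + m - j)

/-!
Since `t_m = (1/m!) Δ^m p_m` and `p_m(x) = (x)_m (x - M)_m` is a product of falling factorials,
the discrete Leibniz rule together with `Δ^k (x)_n = n^{(k)} (x)_{n-k}` gives the closed form
`t_m(z) = ∑_k C(m,k)² (z)_{m-k} (z + k - M)_k`. As `m ≤ M`, every factor `z - i` or
`z + k - M - i` has modulus at most `3 max(|z + k'|, M)` for some integer `k' ∈ [0, m]`, and
`∑_k C(m,k)² = C(2m,m) ≤ 4^m`; hence `|t_m(z)| ≤ 12^m sup_ξ max(|z + ξ|, M)^m`.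
-/

open fwdDiff Polynomial Nat

section Leibniz

variable {A R : Type*} [AddCommMonoid A] [CommRing R] (h : A)

theorem fwdDiff_mul (f g : A → R) :
    Δ_[h] (f * g) = f * Δ_[h] g + Δ_[h] f * fun x => g (x + h) := by
  ext x
  simp only [fwdDiff, Pi.mul_apply, Pi.add_apply]
  ring

theorem fwdDiff_iter_mul (f g : A → R) (n : ℕ) (y : A) :
    (Δ_[h])^[n] (f * g) y = ∑ k ∈ range (n + 1),
      (n.choose k : R) * ((Δ_[h])^[k] f y * (Δ_[h])^[n - k] g (y + k • h)) := by
  induction n generalizing f g with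
  | zero => simp
  | succ n ih =>
    rw [Function.iterate_succ_apply, fwdDiff_mul, fwdDiff_iter_add, Pi.add_apply, ih, ih,
      sum_choose_succ_mul (fun i j => (Δ_[h])^[i] f y * (Δ_[h])^[j] g (y + i • h))]
    congr 1
    · refine sum_congr rfl fun k hk => ?_
      rw [← Function.iterate_succ_apply, Nat.succ_sub (Nat.lt_succ_iff.mp (mem_range.mp hk))]
    · refine sum_congr rfl fun k _ => ?_
      rw [fwdDiff_iter_comp_add, ← Function.iterate_succ_apply, succ_nsmul, add_assoc]

end Leibniz

section descPochhammer

variable {R : Type*} [CommRing R]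

theorem fwdDiff_descPochhammer_eval (n : ℕ) :
    Δ_[1] (fun z : R => (descPochhammer R (n + 1)).eval z)
      = ((n + 1 : ℕ) : R) • fun z => (descPochhammer R n).eval z := by
  ext z
  have h_shift :
      (descPochhammer R (n + 1)).eval (z + 1) = (z + 1) * (descPochhammer R n).eval z := by
    simp [descPochhammer_succ_left]
  simp only [fwdDiff, h_shift, descPochhammer_succ_eval, Pi.smul_apply, smul_eq_mul]
  push_cast
  ring

theorem fwdDiff_iter_descPochhammer_eval {k n : ℕ} (hk : k ≤ n) :
    (Δ_[1])^[k] (fun z : R => (descPochhammer R n).eval z)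
      = (n.descFactorial k : R) • fun z => (descPochhammer R (n - k)).eval z := by
  induction k generalizing n with
  | zero => simp
  | succ k ih =>
    obtain ⟨n, rfl⟩ := Nat.exists_eq_add_of_le' (Nat.one_le_of_lt hk)
    rw [Function.iterate_succ_apply, fwdDiff_descPochhammer_eval, fwdDiff_iter_const_smul,
      ih (by omega), smul_smul, Nat.succ_descFactorial_succ, Nat.add_sub_add_right]
    push_cast
    rfl

end descPochhammer

theorem Nat.choose_mul_descFactorial_mul_descFactorial_sub {n k : ℕ} (hk : k ≤ n) :
    n.choose k * n.descFactorial k * n.descFactorial (n - k) = n ! * n.choose k ^ 2 := by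
  rw [Nat.descFactorial_eq_factorial_mul_choose, Nat.descFactorial_eq_factorial_mul_choose,
    Nat.choose_symm hk, ← Nat.choose_mul_factorial_mul_factorial hk]
  ring

theorem discreteChebTC_eq_fwdDiff_iter (M m : ℕ) (z : ℂ) :
    discreteChebTC M m z = (m ! : ℂ)⁻¹ * (Δ_[1])^[m] (discreteChebPC M m) z := by
  rw [discreteChebTC, one_div, fwdDiff_iter_eq_sum_shift, ← sum_range_reflect]
  congr 1
  refine sum_congr rfl fun j hj => ?_
  have hj : j ≤ m := Nat.lt_succ_iff.mp (mem_range.mp hj)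
  rw [Nat.add_sub_cancel, Nat.choose_symm hj, zsmul_eq_mul]
  push_cast [Nat.cast_sub hj]
  ring_nf

theorem discreteChebPC_eq_mul (M m : ℕ) :
    discreteChebPC M m
      = (fun z => (descPochhammer ℂ m).eval z)
        * fun z => (descPochhammer ℂ m).eval (z + -(M : ℂ)) := by
  ext z
  simp only [discreteChebPC, Pi.mul_apply, descPochhammer_eval_eq_prod_range, sub_eq_add_neg]

theorem discreteChebTC_eq_sum (M m : ℕ) (z : ℂ) :
    discreteChebTC M m z = ∑ k ∈ range (m + 1),
      (m.choose k : ℂ) ^ 2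
        * ((descPochhammer ℂ (m - k)).eval z * (descPochhammer ℂ k).eval (z + k - M)) := by
  rw [discreteChebTC_eq_fwdDiff_iter, discreteChebPC_eq_mul, fwdDiff_iter_mul, mul_sum]
  refine sum_congr rfl fun k hk => ?_
  have hk : k ≤ m := Nat.lt_succ_iff.mp (mem_range.mp hk)
  have hcoeff : ((m.choose k * m.descFactorial k * m.descFactorial (m - k) : ℕ) : ℂ)
      = m ! * (m.choose k : ℂ) ^ 2 := by
    exact_mod_cast Nat.choose_mul_descFactorial_mul_descFactorial_sub hk
  rw [fwdDiff_iter_comp_add 1 (fun w => (descPochhammer ℂ m).eval w),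
    fwdDiff_iter_descPochhammer_eval hk, fwdDiff_iter_descPochhammer_eval (Nat.sub_le m k),
    Nat.sub_sub_self hk]
  push_cast at hcoeff
  simp only [Pi.smul_apply, smul_eq_mul, nsmul_eq_mul, mul_one, ← sub_eq_add_neg]
  rw [inv_mul_eq_iff_eq_mul₀ (Nat.cast_ne_zero.mpr (factorial_ne_zero m))]
  linear_combination
    (descPochhammer ℂ (m - k)).eval z * (descPochhammer ℂ k).eval (z + k - M) * hcoeff

theorem norm_descPochhammer_eval_le {R : Type*} [NormedCommRing R] [NormOneClass R]
    (k : ℕ) (w : R) : ‖(descPochhammer R k).eval w‖ ≤ (‖w‖ + k) ^ k := by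
  rw [descPochhammer_eval_eq_prod_range]
  calc ‖∏ i ∈ range k, (w - i)‖ ≤ ∏ i ∈ range k, ‖w - i‖ := norm_prod_le _ _
    _ ≤ ∏ _i ∈ range k, (‖w‖ + k) := by
      refine prod_le_prod (fun _ _ => norm_nonneg _) fun i hi => ?_
      have hik : (i : ℝ) ≤ k := by exact_mod_cast (mem_range.mp hi).le
      calc ‖w - i‖ ≤ ‖w‖ + ‖(i : R)‖ := norm_sub_le _ _
        _ ≤ ‖w‖ + k := by grw [Nat.norm_cast_le, norm_one, mul_one, hik]
    _ = (‖w‖ + k) ^ k := by rw [prod_const, card_range]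

theorem norm_descPochhammer_eval_mul_le {M m k : ℕ} (hkm : k ≤ m) (hmM : m ≤ M) (z : ℂ) :
    ‖(descPochhammer ℂ (m - k)).eval z * (descPochhammer ℂ k).eval (z + k - M)‖
      ≤ (3 * max (max ‖z‖ M) (max ‖z + k‖ M)) ^ m := by
  set B := max (max ‖z‖ M) (max ‖z + k‖ M)
  have hM : (M : ℝ) ≤ B := (le_max_right _ _).trans (le_max_left _ _)
  have hm : ((m - k : ℕ) : ℝ) ≤ M := by exact_mod_cast (m.sub_le k).trans hmM
  have hk : (k : ℝ) ≤ M := by exact_mod_cast hkm.trans hmM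
  have hz : ‖z‖ ≤ B := (le_max_left _ _).trans (le_max_left _ _)
  have hzk : ‖z + k‖ ≤ B := (le_max_left _ _).trans (le_max_right _ _)
  have h_left : ‖z‖ + (m - k : ℕ) ≤ 3 * B := by linarith
  have h_right : ‖z + k - M‖ + k ≤ 3 * B := by
    have := norm_sub_le (z + k) M
    rw [Complex.norm_natCast] at this
    linarith
  rw [norm_mul, ← pow_sub_mul_pow _ hkm]
  gcongr
  · exact (norm_descPochhammer_eval_le _ _).trans (by gcongr)
  · exact (norm_descPochhammer_eval_le _ _).trans (by gcongr)

theorem le_iSup_Icc_of_continuous {f : ℝ → ℝ} (hf : Continuous f) {a b x : ℝ}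
    (hx : x ∈ Set.Icc a b) : f x ≤ ⨆ ξ : Set.Icc a b, f ξ :=
  le_ciSup (isCompact_range (hf.comp continuous_subtype_val)).bddAbove
    (⟨x, hx⟩ : Set.Icc a b)

theorem norm_discreteChebTC_le_twelve_pow {M m : ℕ} (hmM : m ≤ M) (z : ℂ) :
    ‖discreteChebTC M m z‖
      ≤ 12 ^ m * ⨆ ξ : Set.Icc (0 : ℝ) (m : ℝ), (max ‖z + ((ξ : ℝ) : ℂ)‖ M) ^ m := by
  set S := ⨆ ξ : Set.Icc (0 : ℝ) (m : ℝ), (max ‖z + ((ξ : ℝ) : ℂ)‖ M) ^ m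
  have hS0 : 0 ≤ S := Real.iSup_nonneg fun ξ => by positivity
  have hS : ∀ k ≤ m, max ‖z + k‖ M ^ m ≤ S := fun k hk => by
    simpa using
      le_iSup_Icc_of_continuous (f := fun x : ℝ => max ‖z + x‖ M ^ m) (by fun_prop)
        ⟨k.cast_nonneg, (Nat.cast_le.mpr hk : (k : ℝ) ≤ m)⟩
  have hterm : ∀ k ∈ range (m + 1),
      ‖(m.choose k : ℂ) ^ 2 * ((descPochhammer ℂ (m - k)).eval z
          * (descPochhammer ℂ k).eval (z + k - M))‖ ≤ (m.choose k : ℝ) ^ 2 * (3 ^ m * S) := by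
    intro k hk
    have hk : k ≤ m := Nat.lt_succ_iff.mp (mem_range.mp hk)
    rw [norm_mul, norm_pow, Complex.norm_natCast]
    gcongr
    refine (norm_descPochhammer_eval_mul_le hk hmM z).trans ?_
    rw [mul_pow]
    gcongr
    rcases max_choice (max ‖z‖ M) (max ‖z + k‖ M) with h | h <;> rw [h]
    · simpa using hS 0 m.zero_le
    · exact hS k hk
  calc ‖discreteChebTC M m z‖
      ≤ ∑ k ∈ range (m + 1), (m.choose k : ℝ) ^ 2 * (3 ^ m * S) := by
        rw [discreteChebTC_eq_sum]
        exact (norm_sum_le _ _).trans (sum_le_sum hterm)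
    _ = m.centralBinom * 3 ^ m * S := by
        rw [← sum_mul, centralBinom_eq_two_mul_choose, ← sum_range_choose_sq]
        push_cast
        ring
    _ ≤ 4 ^ m * 3 ^ m * S := by
        gcongr
        exact_mod_cast centralBinom_le_four_pow m
    _ = 12 ^ m * S := by rw [← mul_pow]; norm_num

theorem stmt6_general (M m : ℕ) (hm1 : 1 ≤ m) (hm2 : m + 1 ≤ M) (z : ℂ) :
    ‖discreteChebTC M m z‖
      ≤ (m : ℝ) ^ 2 * 2 ^ (6 * m) *
          ⨆ ξ : Set.Icc (0 : ℝ) (m : ℝ), (max ‖z + ((ξ : ℝ) : ℂ)‖ M) ^ m := by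
  refine (norm_discreteChebTC_le_twelve_pow (by omega) z).trans ?_
  have hS : 0 ≤ ⨆ ξ : Set.Icc (0 : ℝ) (m : ℝ), (max ‖z + ((ξ : ℝ) : ℂ)‖ M) ^ m :=
    Real.iSup_nonneg fun ξ => by positivity
  have h12 : (12 : ℝ) ^ m ≤ (m : ℝ) ^ 2 * 2 ^ (6 * m) := calc
    (12 : ℝ) ^ m ≤ 64 ^ m := by gcongr; norm_num
    _ = 1 * 2 ^ (6 * m) := by rw [pow_mul]; norm_num
    _ ≤ (m : ℝ) ^ 2 * 2 ^ (6 * m) := by gcongr; exact_mod_cast Nat.one_le_pow _ _ hm1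
  gcongr

/-- For all integers `M ≥ 2`, `1 ≤ m ≤ M−1`, and all `z ∈ ℂ`,
`|t_m(z)| ≤ m²·2^{6m}·sup_{ξ ∈ [0,m]} (max(|z+ξ|, M))^m`, the supremum over real `ξ ∈ [0,m]`. -/
theorem stmt6 (M m : ℕ) (hM : 2 ≤ M) (hm1 : 1 ≤ m) (hm2 : m + 1 ≤ M) (z : ℂ) :
    ‖discreteChebTC M m z‖
      ≤ (m : ℝ) ^ 2 * 2 ^ (6 * m) *
          ⨆ ξ : Set.Icc (0 : ℝ) (m : ℝ), (max ‖z + ((ξ : ℝ) : ℂ)‖ M) ^ m :=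
  stmt6_general M m hm1 hm2 z
end

section
/- For all integers M ≥ 2 and 1 ≤ m ≤ M−1 and all complex numbers z, the m-th derivative of p_m satisfies |p_m^{(m)}(z)| ≤ m²·2^{6m}·m!·( max(|z|, M) )^m. -/
/-!
A monic polynomial whose roots have norm at most `B` is majorized coefficientwise by
`(X + B) ^ deg p`, its coefficients being elementary symmetric functions of the roots.
Coefficientwise majorants survive differentiation and bound values, `‖p⁽ᵏ⁾(z)‖ ≤ q⁽ᵏ⁾(‖z‖)`.
The roots of `p_m` have norm at most `M + m ≤ 2M`, so with `A = max ‖z‖ M` we get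
`‖p_m⁽ᵐ⁾(z)‖ ≤ (2m)!/m! · (3A)^m ≤ m! · 4^m · 3^m · A^m`, and `12^m ≤ 2^(6m)`.
-/

open Finset Polynomial

/-- The polynomial `p_m(x) = x(x−1)⋯(x−m+1)·(x−M)(x−M−1)⋯(x−M−m+1)` as a polynomial over `ℂ`. -/
noncomputable def discreteChebPoly (M m : ℕ) : Polynomial ℂ :=
  (∏ i ∈ Finset.range m, (X - C (i : ℂ))) * ∏ i ∈ Finset.range m, (X - C ((M : ℂ) + i))

section Majorant

variable {𝕜 : Type*} [NormedField 𝕜] {p : 𝕜[X]} {q : ℝ[X]}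

theorem norm_coeff_iterate_derivative_le (h : ∀ i, ‖p.coeff i‖ ≤ q.coeff i) (k i : ℕ) :
    ‖(derivative^[k] p).coeff i‖ ≤ (derivative^[k] q).coeff i := by
  rw [coeff_iterate_derivative, coeff_iterate_derivative, nsmul_eq_mul, nsmul_eq_mul]
  calc ‖((i + k).descFactorial k : 𝕜) * p.coeff (i + k)‖
      ≤ (i + k).descFactorial k * ‖p.coeff (i + k)‖ := by
        refine (norm_mul_le _ _).trans (mul_le_mul_of_nonneg_right ?_ (norm_nonneg _))
        simpa using Nat.norm_cast_le (α := 𝕜) ((i + k).descFactorial k)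
    _ ≤ _ := by gcongr; exact h _

theorem norm_eval_le_eval_norm (h : ∀ i, ‖p.coeff i‖ ≤ q.coeff i) (z : 𝕜) :
    ‖p.eval z‖ ≤ q.eval ‖z‖ := by
  set n := max p.natDegree q.natDegree + 1
  rw [eval_eq_sum_range' (n := n) (by omega), eval_eq_sum_range' (n := n) (by omega)]
  refine (norm_sum_le _ _).trans (sum_le_sum fun i _ => ?_)
  rw [norm_mul, norm_pow]
  gcongr
  exact h i

end Majorant

theorem norm_coeff_le_coeff_X_add_C_pow_of_roots_le {𝕜 : Type*} [NormedField 𝕜] [IsAlgClosed 𝕜]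
    {p : 𝕜[X]} (hp : p.Monic) {B : ℝ} (hB : ∀ a ∈ p.roots, ‖a‖ ≤ B) (i : ℕ) :
    ‖p.coeff i‖ ≤ ((X + C B) ^ p.natDegree).coeff i := by
  rw [coeff_X_add_C_pow]
  simpa using
    coeff_le_of_roots_le (f := RingHom.id 𝕜) i hp (IsAlgClosed.splits _) (by simpa using hB)

theorem norm_eval_iterate_derivative_le_of_roots_le {𝕜 : Type*} [NormedField 𝕜] [IsAlgClosed 𝕜]
    {p : 𝕜[X]} (hp : p.Monic) {B : ℝ} (hB : ∀ a ∈ p.roots, ‖a‖ ≤ B) (k : ℕ) (z : 𝕜) :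
    ‖(derivative^[k] p).eval z‖ ≤
      p.natDegree.descFactorial k * (‖z‖ + B) ^ (p.natDegree - k) := by
  have h := norm_eval_le_eval_norm
    (norm_coeff_iterate_derivative_le (norm_coeff_le_coeff_X_add_C_pow_of_roots_le hp hB) k) z
  simpa [iterate_derivative_X_add_pow] using h

namespace discreteChebPoly

theorem monic (M m : ℕ) : (discreteChebPoly M m).Monic :=
  (monic_prod_of_monic _ _ fun _ _ => monic_X_sub_C _).mul
    (monic_prod_of_monic _ _ fun _ _ => monic_X_sub_C _)

theorem natDegree_eq (M m : ℕ) : (discreteChebPoly M m).natDegree = 2 * m := by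
  rw [discreteChebPoly, (monic_prod_of_monic _ _ fun _ _ => monic_X_sub_C _).natDegree_mul
    (monic_prod_of_monic _ _ fun _ _ => monic_X_sub_C _), natDegree_finsetProd_X_sub_C_eq_card,
    natDegree_finsetProd_X_sub_C_eq_card, card_range, two_mul]

theorem norm_le_of_mem_roots {M m : ℕ} {a : ℂ} (ha : a ∈ (discreteChebPoly M m).roots) :
    ‖a‖ ≤ M + m := by
  have := (mem_roots (monic M m).ne_zero).1 ha
  simp only [IsRoot, discreteChebPoly, eval_mul, eval_prod, eval_sub, eval_X, eval_C, mul_eq_zero,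
    prod_eq_zero_iff, mem_range, sub_eq_zero] at this
  rcases this with ⟨i, hi, rfl⟩ | ⟨i, hi, rfl⟩
  · rw [Complex.norm_natCast]
    have : (i : ℝ) ≤ m := by exact_mod_cast hi.le
    linarith [(M.cast_nonneg : (0 : ℝ) ≤ M)]
  · refine (norm_add_le _ _).trans ?_
    rw [Complex.norm_natCast, Complex.norm_natCast]
    have : (i : ℝ) ≤ m := by exact_mod_cast hi.le
    linarith

end discreteChebPoly

theorem stmt7_general (M m : ℕ) (hm1 : 1 ≤ m) (hm2 : m + 1 ≤ M) (z : ℂ) :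
    ‖(Polynomial.derivative^[m] (discreteChebPoly M m)).eval z‖
      ≤ (m : ℝ) ^ 2 * 2 ^ (6 * m) * (m.factorial : ℝ) * (max ‖z‖ M) ^ m := by
  set A := max ‖z‖ (M : ℝ)
  have hzA : ‖z‖ ≤ A := le_max_left _ _
  have hMA : (M : ℝ) ≤ A := le_max_right _ _
  have hmM : (m : ℝ) ≤ M := by exact_mod_cast (by omega : m ≤ M)
  have hbound := norm_eval_iterate_derivative_le_of_roots_le (discreteChebPoly.monic M m)
    (fun _ ha => discreteChebPoly.norm_le_of_mem_roots ha) m z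
  rw [discreteChebPoly.natDegree_eq, show 2 * m - m = m by omega,
    Nat.descFactorial_eq_factorial_mul_choose] at hbound
  have hchoose : ((2 * m).choose m : ℝ) ≤ 4 ^ m := by
    exact_mod_cast (Nat.centralBinom_eq_two_mul_choose m ▸ Nat.centralBinom_le_four_pow m)
  have hm : (1 : ℝ) ≤ (m : ℝ) ^ 2 := by exact_mod_cast Nat.one_le_pow _ _ hm1
  calc _ ≤ _ := hbound
    _ ≤ (m.factorial : ℝ) * 4 ^ m * (3 * A) ^ m := by
        push_cast
        gcongr
        linarith
    _ = 1 * 12 ^ m * m.factorial * A ^ m := by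
        rw [mul_pow, show (12 : ℝ) ^ m = 4 ^ m * 3 ^ m by rw [← mul_pow]; norm_num]; ring
    _ ≤ (m : ℝ) ^ 2 * 2 ^ (6 * m) * m.factorial * A ^ m := by
        rw [pow_mul]
        gcongr
        norm_num

/-- For all integers `M ≥ 2`, `1 ≤ m ≤ M−1`, and all `z ∈ ℂ`, the `m`-th
derivative of `p_m` satisfies `|p_m^{(m)}(z)| ≤ m²·2^{6m}·m!·(max(|z|, M))^m`. -/
theorem stmt7 (M m : ℕ) (hM : 2 ≤ M) (hm1 : 1 ≤ m) (hm2 : m + 1 ≤ M) (z : ℂ) :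
    ‖(Polynomial.derivative^[m] (discreteChebPoly M m)).eval z‖
      ≤ (m : ℝ) ^ 2 * 2 ^ (6 * m) * (m.factorial : ℝ) * (max ‖z‖ M) ^ m :=
  stmt7_general M m hm1 hm2 z
end

section
/- For all integers M ≥ 1 and 1 ≤ m ≤ M, writing p_m(z) = Σ_{ℓ=0}^{2m} a_ℓ z^ℓ, the coefficients satisfy |a_ℓ| ≤ m·2^{3m}·M^{2m−ℓ} for every ℓ with m ≤ ℓ ≤ 2m. -/
open Finset Polynomial

/-- The polynomial `p_m(x) = x(x−1)⋯(x−m+1)·(x−M)(x−M−1)⋯(x−M−m+1)` as a polynomial over `ℤ`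
(with integer coefficients `a_0, …, a_{2m}`). -/
noncomputable def discreteChebPolyInt (M m : ℕ) : Polynomial ℤ :=
  (∏ i ∈ Finset.range m, (X - C (i : ℤ))) * ∏ i ∈ Finset.range m, (X - C ((M : ℤ) + i))

lemma choose_le_two_pow' (n k : ℕ) : n.choose k ≤ 2 ^ n := by
  rcases le_or_gt k n with h | h
  · calc n.choose k ≤ ∑ i ∈ Finset.range (n + 1), n.choose i :=
        Finset.single_le_sum (fun i _ => Nat.zero_le _) (Finset.mem_range.2 (by omega))
    _ = 2 ^ n := Nat.sum_range_choose n
  · simp [Nat.choose_eq_zero_of_lt h]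

lemma abs_prod_le' (B : ℤ) (hB : 0 ≤ B) (t : Multiset ℤ) (h : ∀ x ∈ t, |x| ≤ B) :
    |t.prod| ≤ B ^ Multiset.card t := by
  induction t using Multiset.induction with
  | empty => simp
  | cons a s ih =>
    simp only [Multiset.prod_cons, Multiset.card_cons, pow_succ']
    calc |a * s.prod| = |a| * |s.prod| := abs_mul _ _
      _ ≤ B * B ^ Multiset.card s :=
          mul_le_mul (h a (Multiset.mem_cons_self a s))
            (ih fun x hx => h x (Multiset.mem_cons_of_mem hx)) (abs_nonneg _) hB

lemma esymm_abs_le' (s : Multiset ℤ) (B : ℤ) (hB : 0 ≤ B)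
    (h : ∀ x ∈ s, |x| ≤ B) (k : ℕ) :
    |s.esymm k| ≤ ((Multiset.card s).choose k : ℤ) * B ^ k := by
  rw [Multiset.esymm]
  calc |((s.powersetCard k).map Multiset.prod).sum|
      ≤ (((s.powersetCard k).map Multiset.prod).map abs).sum :=
        Multiset.abs_sum_le_sum_abs
    _ ≤ Multiset.card (((s.powersetCard k).map Multiset.prod).map abs) • B ^ k := by
        apply Multiset.sum_le_card_nsmul
        intro x hx
        simp only [Multiset.map_map, Multiset.mem_map, Function.comp_apply] at hx
        obtain ⟨t, ht, rfl⟩ := hx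
        rw [Multiset.mem_powersetCard] at ht
        rw [← ht.2]
        exact abs_prod_le' B hB t fun x hx => h x (Multiset.mem_of_le ht.1 hx)
    _ = ((Multiset.card s).choose k : ℤ) * B ^ k := by
        simp [Multiset.card_powersetCard, nsmul_eq_mul]

/-- For all integers `M ≥ 1` and `1 ≤ m ≤ M`, writing
`p_m(z) = Σ_{ℓ=0}^{2m} a_ℓ z^ℓ`, the coefficients satisfy `|a_ℓ| ≤ m·2^{3m}·M^{2m−ℓ}` for
every `ℓ` with `m ≤ ℓ ≤ 2m`. -/
theorem stmt8 (M m : ℕ) (hM : 1 ≤ M) (hm1 : 1 ≤ m) (hm2 : m ≤ M)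
    (ℓ : ℕ) (h1 : m ≤ ℓ) (h2 : ℓ ≤ 2 * m) :
    |(discreteChebPolyInt M m).coeff ℓ| ≤ (m : ℤ) * 2 ^ (3 * m) * (M : ℤ) ^ (2 * m - ℓ) := by
  set s : Multiset ℤ :=
    ((Finset.range m).val.map (fun i : ℕ => (i : ℤ))) +
      ((Finset.range m).val.map (fun i : ℕ => (M : ℤ) + i)) with hs
  have hcard : Multiset.card s = 2 * m := by simp [hs, two_mul]
  have hp : discreteChebPolyInt M m = (s.map fun t => X - C t).prod := by
    simp [discreteChebPolyInt, hs, Multiset.map_add, Multiset.prod_add,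
      Finset.prod_eq_multiset_prod, Multiset.map_map, Function.comp_def]
  have hroot : ∀ x ∈ s, |x| ≤ 2 * (M : ℤ) := by
    intro x hx
    rw [hs, Multiset.mem_add] at hx
    have hMm : (m : ℤ) ≤ M := by exact_mod_cast hm2
    rcases hx with hx | hx <;>
      · obtain ⟨i, hi, rfl⟩ := Multiset.mem_map.mp hx
        rw [Finset.mem_val, Finset.mem_range] at hi
        rw [abs_of_nonneg (by positivity)]
        have : (i : ℤ) < m := by exact_mod_cast hi
        omega
  have hk : ℓ ≤ Multiset.card s := by omega
  rw [hp, Multiset.prod_X_sub_C_coeff s hk, abs_mul, abs_pow, abs_neg, abs_one, one_pow,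
    one_mul, hcard]
  have hMpos : (0 : ℤ) ≤ (M : ℤ) := by positivity
  calc |s.esymm (2 * m - ℓ)|
      ≤ ((2 * m).choose (2 * m - ℓ) : ℤ) * (2 * (M : ℤ)) ^ (2 * m - ℓ) := by
        have := esymm_abs_le' s (2 * (M : ℤ)) (by positivity) hroot (2 * m - ℓ)
        rwa [hcard] at this
    _ = ((2 * m).choose (2 * m - ℓ) : ℤ) * 2 ^ (2 * m - ℓ) * (M : ℤ) ^ (2 * m - ℓ) := by
        rw [mul_pow]; ring
    _ ≤ (2 : ℤ) ^ (2 * m) * 2 ^ m * (M : ℤ) ^ (2 * m - ℓ) := by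
        have hc : ((2 * m).choose (2 * m - ℓ) : ℤ) ≤ 2 ^ (2 * m) := by
          exact_mod_cast choose_le_two_pow' (2 * m) (2 * m - ℓ)
        have hp2 : (2 : ℤ) ^ (2 * m - ℓ) ≤ 2 ^ m :=
          pow_le_pow_right₀ (by norm_num) (by omega)
        have hMp : (0:ℤ) ≤ (M : ℤ) ^ (2 * m - ℓ) := by positivity
        exact mul_le_mul_of_nonneg_right
          (mul_le_mul hc hp2 (by positivity) (by positivity)) hMp
    _ ≤ (m : ℤ) * 2 ^ (3 * m) * (M : ℤ) ^ (2 * m - ℓ) := by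
        have h3 : (2 : ℤ) ^ (2 * m) * 2 ^ m = 2 ^ (3 * m) := by
          rw [← pow_add]; ring_nf
        rw [h3]
        have h1m : (1 : ℤ) ≤ (m : ℤ) := by exact_mod_cast hm1
        rw [mul_assoc]
        exact le_mul_of_one_le_left (by positivity) h1m
end

section
/- There exist absolute constants 0 < c ≤ C such that for all integers 1 ≤ m ≤ n, the unsigned Stirling number of the first kind satisfies n!·( c·max(1, log(n/m))/m )^m ≤ |s(n+1, m+1)| ≤ n!·( C·max(1, log(n/m))/m )^m. -/
/-!
Dividing `x(x+1)⋯(x+n)` by `n! x` leaves `∏_{k=1}^n (1 + x/k)`, so `|s(n+1, m+1)| = n! e_m`, where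
`e_m` is the `m`-th elementary symmetric function of `1, 1/2, …, 1/n`. Put `L = max(1, log(n/m))`.

Upper bound: for `t > 0`, `e_m t^m ≤ ∏ (1 + t/k)`; the factors with `k ≤ ⌈t⌉` contribute at most
`e^{2(t+1)}` and the others at most `exp(t log(n/t))`. At `t = m/L` this is `e^{O(m)}`, giving
`e_m ≤ (e^5 L/m)^m`.

Lower bound: if `log(n/m) ≤ 2` then `e_m ≥ 1/m! ≥ m^{-m}`. Otherwise cut `(m, n]` at the
geometric points `m (n/m)^{i/m}` into `m` blocks, each with harmonic sum at least
`(log(n/m) - 1)/m`; picking one element from each block shows that `e_m` dominates the product of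
the block sums.
-/

open Polynomial Finset Real
open scoped Nat

section NonnegCoeff

variable {R : Type*} [Semiring R] [PartialOrder R] [IsOrderedRing R] {p q : R[X]}

lemma coeff_mul_nonneg (hp : ∀ i, 0 ≤ p.coeff i) (hq : ∀ i, 0 ≤ q.coeff i) (i : ℕ) :
    0 ≤ (p * q).coeff i := by
  rw [coeff_mul]
  exact sum_nonneg fun x _ ↦ mul_nonneg (hp _) (hq _)

lemma coeff_mul_coeff_le_coeff_mul (hp : ∀ i, 0 ≤ p.coeff i) (hq : ∀ i, 0 ≤ q.coeff i)
    (a b : ℕ) : p.coeff a * q.coeff b ≤ (p * q).coeff (a + b) := by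
  rw [coeff_mul]
  exact single_le_sum (f := fun x : ℕ × ℕ ↦ p.coeff x.1 * q.coeff x.2)
    (fun x _ ↦ mul_nonneg (hp _) (hq _)) (a := (a, b)) (mem_antidiagonal.mpr rfl)

lemma coeff_mul_pow_le_eval (hp : ∀ i, 0 ≤ p.coeff i) {t : R} (ht : 0 ≤ t) (m : ℕ) :
    p.coeff m * t ^ m ≤ p.eval t := by
  rw [eval_eq_sum_range' (n := max m p.natDegree + 1) (by omega)]
  exact single_le_sum (f := fun i ↦ p.coeff i * t ^ i)
    (fun i _ ↦ mul_nonneg (hp i) (pow_nonneg ht i)) (mem_range.mpr (by omega))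

end NonnegCoeff

section Esymm

variable {ι R : Type*} [CommSemiring R] (s : Finset ι) (x : ι → R)

noncomputable def esymmPoly : R[X] := ∏ k ∈ s, (1 + C (x k) * X)

lemma eval_esymmPoly (t : R) : (esymmPoly s x).eval t = ∏ k ∈ s, (1 + x k * t) := by
  simp [esymmPoly, eval_prod]

lemma coeff_esymmPoly_zero : (esymmPoly s x).coeff 0 = 1 := by
  simp [coeff_zero_eq_eval_zero, eval_esymmPoly]

lemma coeff_esymmPoly_one : (esymmPoly s x).coeff 1 = ∑ k ∈ s, x k := by
  classical
  induction s using Finset.induction_on with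
  | empty => simp [esymmPoly, coeff_one]
  | insert a s ha ih =>
    rw [esymmPoly, prod_insert ha, ← esymmPoly, sum_insert ha, add_mul, one_mul, coeff_add,
      mul_assoc, coeff_C_mul, coeff_X_mul, coeff_esymmPoly_zero, ih, mul_one, add_comm]

lemma coeff_esymmPoly_card : (esymmPoly s x).coeff #s = ∏ k ∈ s, x k := by
  have h := coeff_prod_of_natDegree_le (s := s) (fun k ↦ 1 + C (x k) * X) 1 fun k _ ↦
    (natDegree_add_le _ _).trans (max_le (by simp) ((natDegree_C_mul_le _ _).trans natDegree_X_le))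
  rw [mul_one] at h
  simp [esymmPoly, h, coeff_one]

variable [PartialOrder R] [IsOrderedRing R]

lemma coeff_esymmPoly_nonneg (hx : ∀ k, 0 ≤ x k) (i : ℕ) : 0 ≤ (esymmPoly s x).coeff i :=
  prod_induction _ (fun p : R[X] ↦ ∀ i, 0 ≤ p.coeff i) (fun _ _ ↦ coeff_mul_nonneg)
    (fun i ↦ by rw [coeff_one]; split_ifs <;> simp)
    (fun k _ i ↦ by rcases i with _ | _ | i <;> simp [coeff_one, coeff_X, hx k]) i

lemma coeff_esymmPoly_mono [DecidableEq ι] {s u : Finset ι} (hsu : s ⊆ u) (hx : ∀ k, 0 ≤ x k)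
    (i : ℕ) : (esymmPoly s x).coeff i ≤ (esymmPoly u x).coeff i := by
  have h := coeff_mul_coeff_le_coeff_mul (coeff_esymmPoly_nonneg s x hx)
    (coeff_esymmPoly_nonneg (u \ s) x hx) i 0
  rwa [coeff_esymmPoly_zero, mul_one, add_zero, esymmPoly, esymmPoly, ← prod_union disjoint_sdiff,
    union_sdiff_of_subset hsu] at h

end Esymm

lemma prod_sum_le_coeff_esymmPoly {R : Type*} [CommSemiring R] [PartialOrder R] [IsOrderedRing R]
    (x : ℕ → R) {k : ℕ → ℕ} (hk : Monotone k) (hx : ∀ j, 0 ≤ x j) (M : ℕ) :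
    ∏ i ∈ range M, ∑ j ∈ Ioc (k i) (k (i + 1)), x j ≤ (esymmPoly (Ioc (k 0) (k M)) x).coeff M := by
  induction M with
  | zero => simp [coeff_esymmPoly_zero]
  | succ M ih =>
    have hsplit : esymmPoly (Ioc (k 0) (k (M + 1))) x
        = esymmPoly (Ioc (k 0) (k M)) x * esymmPoly (Ioc (k M) (k (M + 1))) x :=
      (prod_Ioc_consecutive _ (hk (Nat.zero_le M)) (hk M.le_succ)).symm
    rw [prod_range_succ, ← coeff_esymmPoly_one, hsplit]
    exact (mul_le_mul_of_nonneg_right ih (coeff_esymmPoly_nonneg _ x hx 1)).trans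
      (coeff_mul_coeff_le_coeff_mul (coeff_esymmPoly_nonneg _ x hx)
        (coeff_esymmPoly_nonneg _ x hx) M 1)

lemma log_add_one_sub_log_le_inv {x : ℝ} (hx : 0 < x) : log (x + 1) - log x ≤ x⁻¹ := by
  have h := log_le_sub_one_of_pos (show 0 < (x + 1) / x by positivity)
  rwa [log_div (by positivity) hx.ne', add_div, div_self hx.ne', one_div, add_sub_cancel_left] at h

lemma inv_add_one_le_log_add_one_sub_log {x : ℝ} (hx : 0 < x) :
    (x + 1)⁻¹ ≤ log (x + 1) - log x := by
  have h := one_sub_inv_le_log_of_pos (show 0 < (x + 1) / x by positivity)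
  rw [log_div (by positivity) hx.ne', inv_div] at h
  convert h using 1
  field_simp
  ring

lemma sum_Ioc_inv_le_log_sub_log {a b : ℕ} (ha : 0 < a) (hab : a ≤ b) :
    ∑ k ∈ Ioc a b, (k : ℝ)⁻¹ ≤ log b - log a := by
  induction b, hab using Nat.le_induction with
  | base => simp
  | succ b hab ih =>
    have h := inv_add_one_le_log_add_one_sub_log (x := b) (by exact_mod_cast ha.trans_le hab)
    rw [sum_Ioc_succ_top hab]
    push_cast
    linarith

lemma log_add_one_sub_log_add_one_le_sum_Ioc_inv {a b : ℕ} (hab : a ≤ b) :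
    log (b + 1) - log (a + 1) ≤ ∑ k ∈ Ioc a b, (k : ℝ)⁻¹ := by
  induction b, hab using Nat.le_induction with
  | base => simp
  | succ b hab ih =>
    have h := log_add_one_sub_log_le_inv (x := b + 1) (by positivity)
    rw [sum_Ioc_succ_top hab]
    push_cast
    linarith

lemma log_sub_log_add_one_le_sum_Ioc_floor_inv {u v : ℝ} (hu : 0 < u) (huv : u ≤ v) :
    log v - log (u + 1) ≤ ∑ k ∈ Ioc ⌊u⌋₊ ⌊v⌋₊, (k : ℝ)⁻¹ := by
  have hv : log v ≤ log (⌊v⌋₊ + 1) := log_le_log (hu.trans_le huv) (Nat.lt_floor_add_one v).le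
  have hu' : log (⌊u⌋₊ + 1) ≤ log (u + 1) := by gcongr; exact Nat.floor_le hu.le
  linarith [log_add_one_sub_log_add_one_le_sum_Ioc_inv (Nat.floor_mono huv)]

lemma prod_Ioc_zero_natCast {R : Type*} [CommSemiring R] (n : ℕ) :
    ∏ k ∈ Ioc 0 n, (k : R) = n ! := by
  induction n with
  | zero => simp
  | succ n ih => rw [prod_Ioc_succ_top n.zero_le, ih, Nat.factorial_succ]; push_cast; ring

lemma prod_Ioc_one_add_inv_mul_le_exp {j : ℕ} {t : ℝ} (ht : 0 ≤ t) (htj : t ≤ j) :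
    ∏ k ∈ Ioc 0 j, (1 + (k : ℝ)⁻¹ * t) ≤ exp (2 * j) := by
  calc ∏ k ∈ Ioc 0 j, (1 + (k : ℝ)⁻¹ * t) ≤ ∏ k ∈ Ioc 0 j, (2 * j / k : ℝ) := by
        refine prod_le_prod (fun k _ ↦ by positivity) fun k hk ↦ ?_
        obtain ⟨hk0, hkj⟩ := mem_Ioc.mp hk
        have hk : (0 : ℝ) < k := by exact_mod_cast hk0
        have : (k : ℝ) ≤ j := by exact_mod_cast hkj
        rw [le_div_iff₀ hk]
        field_simp
        linarith
    _ = (2 * j) ^ j / j ! := by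
        rw [prod_div_distrib, prod_const, Nat.card_Ioc, prod_Ioc_zero_natCast, Nat.sub_zero]
    _ ≤ exp (2 * j) := pow_div_factorial_le_exp _ (by positivity) j

lemma prod_Ioc_one_add_inv_mul_le {n : ℕ} {t : ℝ} (ht : 0 < t) (htn : t ≤ n) :
    ∏ k ∈ Ioc 0 n, (1 + (k : ℝ)⁻¹ * t) ≤ exp (2 * (t + 1) + t * log (n / t)) := by
  set j := ⌈t⌉₊
  have hj : 0 < j := Nat.ceil_pos.mpr ht
  have hjn : j ≤ n := Nat.ceil_le.mpr htn
  have htj : t ≤ j := Nat.le_ceil t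
  have hjt : (j : ℝ) < t + 1 := Nat.ceil_lt_add_one ht.le
  have head : ∏ k ∈ Ioc 0 j, (1 + (k : ℝ)⁻¹ * t) ≤ exp (2 * (t + 1)) :=
    (prod_Ioc_one_add_inv_mul_le_exp ht.le htj).trans (by gcongr)
  have tail : ∏ k ∈ Ioc j n, (1 + (k : ℝ)⁻¹ * t) ≤ exp (t * log (n / t)) := by
    refine (prod_one_add_le_exp_sum _ fun k ↦ by positivity).trans ?_
    rw [← sum_mul, mul_comm, exp_le_exp, log_div (by exact_mod_cast (hj.trans_le hjn).ne') ht.ne']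
    gcongr
    exact (sum_Ioc_inv_le_log_sub_log hj hjn).trans (by gcongr)
  rw [← prod_Ioc_consecutive _ (Nat.zero_le j) hjn, exp_add]
  exact mul_le_mul head tail (prod_nonneg fun k _ ↦ by positivity) (exp_nonneg _)

lemma coeff_esymmPoly_inv_le {m n : ℕ} (hm : 0 < m) (hmn : m ≤ n) :
    (esymmPoly (Ioc 0 n) fun k : ℕ ↦ (k : ℝ)⁻¹).coeff m
      ≤ (exp 5 * max 1 (log (n / m)) / m) ^ m := by
  set L := max 1 (log (n / m))
  have hL : 1 ≤ L := le_max_left _ _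
  have hm' : (0 : ℝ) < m := by exact_mod_cast hm
  have hn' : (0 : ℝ) < n := by exact_mod_cast hm.trans_le hmn
  set t := m / L
  have ht : 0 < t := by positivity
  have htm : t ≤ m := div_le_self hm'.le hL
  have htL : t * L = m := div_mul_cancel₀ _ (by positivity)
  have hexp : 2 * (t + 1) + t * log (n / t) ≤ 5 * m := by
    have hlog : log (n / t) = log (n / m) + log L := by
      rw [div_div_eq_mul_div, mul_div_right_comm, log_mul (by positivity) (by positivity)]
    have h1 : t * log (n / m) ≤ t * L := by gcongr; exact le_max_right _ _
    have h2 : t * log L ≤ t * (L - 1) := by gcongr; exact log_le_sub_one_of_pos (by positivity)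
    have h3 : (1 : ℝ) ≤ m := by exact_mod_cast hm
    rw [hlog]
    nlinarith
  have hcoeff := coeff_mul_pow_le_eval
    (coeff_esymmPoly_nonneg (Ioc 0 n) (fun k : ℕ ↦ (k : ℝ)⁻¹) fun k ↦ by positivity) ht.le m
  rw [eval_esymmPoly] at hcoeff
  calc (esymmPoly (Ioc 0 n) fun k : ℕ ↦ (k : ℝ)⁻¹).coeff m ≤ exp (5 * m) / t ^ m := by
        rw [le_div_iff₀ (by positivity)]
        have htn : t ≤ n := htm.trans (by exact_mod_cast hmn)
        exact hcoeff.trans ((prod_Ioc_one_add_inv_mul_le ht htn).trans (exp_le_exp.mpr hexp))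
    _ = (exp 5 * L / m) ^ m := by
        rw [mul_comm, exp_nat_mul, ← div_pow, div_div_eq_mul_div]

lemma inv_factorial_le_coeff_esymmPoly_inv {m n : ℕ} (hmn : m ≤ n) :
    (m ! : ℝ)⁻¹ ≤ (esymmPoly (Ioc 0 n) fun k : ℕ ↦ (k : ℝ)⁻¹).coeff m := by
  have h := coeff_esymmPoly_card (Ioc 0 m) fun k : ℕ ↦ (k : ℝ)⁻¹
  rw [Nat.card_Ioc, Nat.sub_zero, prod_inv_distrib, prod_Ioc_zero_natCast] at h
  exact h ▸ coeff_esymmPoly_mono _ (Ioc_subset_Ioc_right hmn) (fun k ↦ by positivity) m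

lemma pow_log_sub_one_div_le_coeff_esymmPoly_inv {m n : ℕ} (hm : 0 < m)
    (hlog : 1 ≤ log (n / m)) :
    ((log (n / m) - 1) / m) ^ m ≤ (esymmPoly (Ioc m n) fun k : ℕ ↦ (k : ℝ)⁻¹).coeff m := by
  have hm' : (0 : ℝ) < m := by exact_mod_cast hm
  have hn : 0 < n := Nat.pos_of_ne_zero fun h ↦ by norm_num [h] at hlog
  have hnm : 0 < (n : ℝ) / m := by positivity
  set ℓ := log (n / m)
  -- `a i = m (n/m)^(i/m)` runs geometrically from `a 0 = m` to `a m = n`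
  set a : ℕ → ℝ := fun i ↦ m * exp (i * ℓ / m)
  have ha_mono : Monotone a := fun i j hij ↦ by
    have : (i : ℝ) ≤ j := by exact_mod_cast hij
    simp only [a]; gcongr
  have ha_ge : ∀ i, (m : ℝ) ≤ a i := fun i ↦
    le_mul_of_one_le_right hm'.le (one_le_exp (by positivity))
  have ha0 : ⌊a 0⌋₊ = m := by simp [a]
  have ham : ⌊a m⌋₊ = n := by
    simp only [a]
    rw [mul_div_cancel_left₀ _ hm'.ne', exp_log hnm, mul_div_cancel₀ _ hm'.ne', Nat.floor_natCast]
  have hblock : ∀ i, (ℓ - 1) / m ≤ ∑ j ∈ Ioc ⌊a i⌋₊ ⌊a (i + 1)⌋₊, (j : ℝ)⁻¹ := fun i ↦ by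
    have hai : 0 < a i := hm'.trans_le (ha_ge i)
    have h1 := log_sub_log_add_one_le_sum_Ioc_floor_inv hai (ha_mono i.le_succ)
    have h2 := log_add_one_sub_log_le_inv hai
    have h3 : log (a (i + 1)) - log (a i) = ℓ / m := by
      simp only [a]
      rw [log_mul hm'.ne' (exp_pos _).ne', log_mul hm'.ne' (exp_pos _).ne', log_exp, log_exp]
      push_cast
      ring
    have h4 : (a i)⁻¹ ≤ (m : ℝ)⁻¹ := inv_anti₀ hm' (ha_ge i)
    rw [sub_div, one_div]
    linarith
  have hblocks := prod_sum_le_coeff_esymmPoly (fun k : ℕ ↦ (k : ℝ)⁻¹)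
    (Nat.floor_mono.comp ha_mono) (fun k ↦ by positivity) m
  simp only [Function.comp_apply, ha0, ham] at hblocks
  calc ((ℓ - 1) / m) ^ m = ∏ _i ∈ range m, (ℓ - 1) / m := by rw [prod_const, card_range]
    _ ≤ ∏ i ∈ range m, ∑ j ∈ Ioc ⌊a i⌋₊ ⌊a (i + 1)⌋₊, (j : ℝ)⁻¹ :=
        prod_le_prod (fun _ _ ↦ div_nonneg (by linarith) hm'.le) fun i _ ↦ hblock i
    _ ≤ _ := hblocks

lemma pow_le_coeff_esymmPoly_inv {m n : ℕ} (hm : 0 < m) (hmn : m ≤ n) :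
    (1 / 2 * max 1 (log (n / m)) / m) ^ m
      ≤ (esymmPoly (Ioc 0 n) fun k : ℕ ↦ (k : ℝ)⁻¹).coeff m := by
  rcases le_or_gt (log (n / m)) 2 with hsmall | hlarge
  · calc (1 / 2 * max 1 (log (n / m)) / m) ^ m ≤ (1 / m) ^ m := by
          gcongr
          linarith [max_le one_le_two hsmall]
      _ = ((m : ℝ) ^ m)⁻¹ := by rw [one_div_pow, one_div]
      _ ≤ (m ! : ℝ)⁻¹ := inv_anti₀ (by positivity) (by exact_mod_cast m.factorial_le_pow)
      _ ≤ _ := inv_factorial_le_coeff_esymmPoly_inv hmn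
  · rw [max_eq_right (by linarith)]
    calc (1 / 2 * log (n / m) / m) ^ m ≤ ((log (n / m) - 1) / m) ^ m := by
          gcongr
          linarith
      _ ≤ (esymmPoly (Ioc m n) fun k : ℕ ↦ (k : ℝ)⁻¹).coeff m :=
          pow_log_sub_one_div_le_coeff_esymmPoly_inv hm (by linarith)
      _ ≤ _ := coeff_esymmPoly_mono _ (Ioc_subset_Ioc_left hm.le) (fun k ↦ by positivity) m

lemma ascPochhammer_succ_eq_X_mul_esymmPoly_inv (n : ℕ) :
    ascPochhammer ℝ (n + 1) = X * (C (n ! : ℝ) * esymmPoly (Ioc 0 n) fun k : ℕ ↦ (k : ℝ)⁻¹) := by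
  induction n with
  | zero => simp [esymmPoly]
  | succ n ih =>
    have hlin : X + ((n + 1 : ℕ) : ℝ[X])
        = C ((n + 1 : ℕ) : ℝ) * (1 + C ((n + 1 : ℕ) : ℝ)⁻¹ * X) := by
      rw [mul_add, mul_one, ← mul_assoc, ← C_mul, mul_inv_cancel₀ (by positivity), C_1, one_mul,
        C_eq_natCast, add_comm]
    rw [ascPochhammer_succ_right, ih, hlin, esymmPoly, esymmPoly, prod_Ioc_succ_top n.zero_le,
      Nat.factorial_succ, Nat.cast_mul, C_mul]
    ring

lemma natCast_coeff_ascPochhammer_succ_succ (n m : ℕ) :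
    ((ascPochhammer ℕ (n + 1)).coeff (m + 1) : ℝ)
      = n ! * (esymmPoly (Ioc 0 n) fun k : ℕ ↦ (k : ℝ)⁻¹).coeff m := by
  rw [← eq_natCast (Nat.castRingHom ℝ), ← coeff_map, ascPochhammer_map,
    ascPochhammer_succ_eq_X_mul_esymmPoly_inv, coeff_X_mul, coeff_C_mul]

/-- There exist absolute constants `0 < c ≤ C` such that for all integers
`1 ≤ m ≤ n`, the unsigned Stirling number of the first kind `|s(n+1, m+1)|`, defined as the
coefficient of `x^{m+1}` in the rising factorial `x(x+1)⋯(x+n)`, satisfies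
`n!·(c·max(1, log(n/m))/m)^m ≤ |s(n+1, m+1)| ≤ n!·(C·max(1, log(n/m))/m)^m`. -/
theorem stmt9 : ∃ c C : ℝ, 0 < c ∧ c ≤ C ∧
    ∀ n m : ℕ, 1 ≤ m → m ≤ n →
      (n.factorial : ℝ) * (c * max 1 (Real.log ((n : ℝ) / m)) / m) ^ m
          ≤ ((ascPochhammer ℕ (n + 1)).coeff (m + 1) : ℝ) ∧
      ((ascPochhammer ℕ (n + 1)).coeff (m + 1) : ℝ)
          ≤ (n.factorial : ℝ) * (C * max 1 (Real.log ((n : ℝ) / m)) / m) ^ m := by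
  refine ⟨1 / 2, exp 5, by norm_num, by linarith [add_one_le_exp 5], fun n m hm hmn ↦ ?_⟩
  rw [natCast_coeff_ascPochhammer_succ_succ]
  exact ⟨mul_le_mul_of_nonneg_left (pow_le_coeff_esymmPoly_inv hm hmn) (by positivity),
    mul_le_mul_of_nonneg_left (coeff_esymmPoly_inv_le hm hmn) (by positivity)⟩
end

section
/- Assume the Poisson sampling model with mean sample size n from a k-ball urn. Let L = α·log k and M = β·k·log k/n be positive integers with β > α > 0. Given w ∈ ℝ^L, set u_j = w_j · j! · (k/(nM))^j for 1 ≤ j ≤ L and u_j = 0 for j = 0 and j > L. Define the estimator C̃ = Σ_{i=1}^{k} g(N_i), where g(0) = 0 and g(j) = 1 + u_j for j ≥ 1, and let Ĉ = min( max( C̃, Σ_{i=1}^{k} 1{N_i ≥ 1} ), k ). Then E[(Ĉ − C)²] ≤ k²·e^{−2n/k}·‖Bw − 𝟏‖_∞² + k·e^{−n/k} + k·max_{m ∈ {1,…,M}} E_{N ~ Poisson(nm/k)}[u_N²] + k^{−(β − α·log(eβ/α) − 3)}. -/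
/-!
Write `φ(j) = g(j) - 1` for `j ≥ 1` and `φ(0) = -1`, so that `C̃ - C = Σ_{urn i > 0} φ(N_i)`.
Clamping `C̃` into `[#{observed colors}, k]`, an interval containing `C`, can only decrease the
error. Colors with more than `M` balls have rate at least `β log k ≥ L`, so outside an event of
probability at most `k · e^{-β log k} (eβ/α)^L` (a Chernoff bound for the lower Poisson tail)
they are all seen more than `L` times, where `φ = u` vanishes; on that event `C̃ - C` is a sum
of independent terms `φ(N_i)` over the colors with `1 ≤ urn i ≤ M`. Each term has mean
`e^{-r_i} ((Bw)_{urn i} - 1)` and second moment `e^{-r_i} + E_{Poi(r_i)}[u²]` with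
`r_i = n·urn i/k ≥ n/k`, and the second moment of a sum of independent variables is at most the
squared sum of the means plus the sum of the second moments. The bad event costs at most `k²`.
-/

open Finset MeasureTheory ProbabilityTheory
open scoped NNReal

set_option linter.deprecated false

lemma abs_min_max_sub_le_abs_sub {x a b c : ℝ} (hac : a ≤ c) (hcb : c ≤ b) :
    |min (max x a) b - c| ≤ |x - c| :=
  calc |min (max x a) b - c| = |min (max x a) b - min (max c a) b| := by
        rw [max_eq_left hac, min_eq_left hcb]
    _ ≤ max |max x a - max c a| |b - b| := abs_min_sub_min_le_max _ _ _ _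
    _ ≤ |x - c| := by
        rw [sub_self, abs_zero, max_eq_left (abs_nonneg _)]
        exact abs_max_sub_max_le_abs _ _ _

lemma sq_min_max_sub_le_sq {x a b c : ℝ} (ha : 0 ≤ a) (hc : 0 ≤ c) (hcb : c ≤ b) :
    (min (max x a) b - c) ^ 2 ≤ b ^ 2 := by
  have h0 : 0 ≤ min (max x a) b := le_min (ha.trans (le_max_right _ _)) (hc.trans hcb)
  have h1 : min (max x a) b ≤ b := min_le_right _ _
  nlinarith

lemma exp_neg_mul_pow_le_of_le {L : ℕ} {a b : ℝ} (hLa : (L : ℝ) ≤ a) (ha : 0 < a) (hab : a ≤ b) :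
    Real.exp (-b) * b ^ L ≤ Real.exp (-a) * a ^ L := by
  have hpow : (b / a) ^ L ≤ Real.exp (b - a) := calc
    (b / a) ^ L ≤ Real.exp (b / a - 1) ^ L := by
        gcongr
        · exact div_nonneg (ha.le.trans hab) ha.le
        · linarith [Real.add_one_le_exp (b / a - 1)]
    _ = Real.exp (L * (b / a - 1)) := by rw [Real.exp_nat_mul]
    _ ≤ Real.exp (a * (b / a - 1)) := by
        gcongr
        rw [sub_nonneg, one_le_div ha]
        exact hab
    _ = Real.exp (b - a) := by congr 1; field_simp
  calc Real.exp (-b) * b ^ L = Real.exp (-b) * a ^ L * (b / a) ^ L := by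
        rw [mul_assoc, ← mul_pow, mul_div_cancel₀ _ ha.ne']
    _ ≤ Real.exp (-b) * a ^ L * Real.exp (b - a) := by gcongr
    _ = Real.exp (-a) * a ^ L := by
        rw [mul_right_comm, ← Real.exp_add]
        ring_nf

lemma pow_three_mul_exp_neg_mul_div_pow_eq_rpow {k α β : ℝ} (hk : 0 < k) (hα : 0 < α) (hβ : 0 < β)
    {L : ℕ} (hL : (L : ℝ) = α * Real.log k) (hlog : Real.log k ≠ 0) :
    k ^ 3 * (Real.exp (-(β * Real.log k)) * (β * Real.log k / L) ^ L * Real.exp L)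
      = k ^ (-(β - α * Real.log (Real.exp 1 * β / α) - 3)) := by
  have hratio : β * Real.log k / L = β / α := by
    rw [hL]
    field_simp
  have hpow : (β / α) ^ L * Real.exp L = Real.exp (L * Real.log (Real.exp 1 * β / α)) := by
    rw [mul_div_assoc, Real.log_mul (Real.exp_pos 1).ne' (by positivity), Real.log_exp,
      mul_add, mul_one, Real.exp_add, Real.exp_nat_mul, Real.exp_log (by positivity), mul_comm]
  rw [hratio, mul_assoc, hpow, hL, Real.rpow_def_of_pos hk, ← Real.exp_log (pow_pos hk 3),
    Real.log_pow, ← Real.exp_add, ← Real.exp_add]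
  congr 1
  push_cast
  ring

lemma abs_le_sum_range_abs_of_eq_zero {f : ℕ → ℝ} {T : ℕ} (hf : ∀ j, T < j → f j = 0) (j : ℕ) :
    |f j| ≤ ∑ i ∈ range (T + 1), |f i| := by
  rcases le_or_gt j T with hj | hj
  · exact single_le_sum (f := fun i => |f i|) (fun _ _ => abs_nonneg _)
      (mem_range.mpr (Nat.lt_succ_of_le hj))
  · rw [hf j hj, abs_zero]
    exact sum_nonneg fun _ _ => abs_nonneg _

lemma integral_sq_sum_le_of_iIndepFun {ι Ω : Type*} [MeasurableSpace Ω] {μ : Measure Ω}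
    [IsProbabilityMeasure μ] {Y : ι → Ω → ℝ} (hY : iIndepFun Y μ) (hL2 : ∀ i, MemLp (Y i) 2 μ)
    (s : Finset ι) :
    ∫ ω, (∑ i ∈ s, Y i ω) ^ 2 ∂μ
      ≤ (∑ i ∈ s, ∫ ω, Y i ω ∂μ) ^ 2 + ∑ i ∈ s, ∫ ω, Y i ω ^ 2 ∂μ := by
  have hvar := IndepFun.variance_sum (s := s) (fun i _ => hL2 i) fun i _ j _ hij => hY.indepFun hij
  rw [variance_eq_sub (memLp_finsetSum' s fun i _ => hL2 i)] at hvar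
  have hmean : ∫ ω, (∑ i ∈ s, Y i) ω ∂μ = ∑ i ∈ s, ∫ ω, Y i ω ∂μ := by
    simp only [Finset.sum_apply]
    exact integral_finsetSum s fun i _ => (hL2 i).integrable one_le_two
  have hvar_le := sum_le_sum fun i (_ : i ∈ s) =>
    variance_le_expectation_sq (hL2 i).aestronglyMeasurable
  simp only [Pi.pow_apply, Finset.sum_apply] at hvar hmean hvar_le
  rw [hmean] at hvar
  linarith

lemma integral_sq_sum_le_of_iIndepFun_of_le {ι Ω : Type*} [MeasurableSpace Ω] {μ : Measure Ω}
    [IsProbabilityMeasure μ] {Y : ι → Ω → ℝ} (hY : iIndepFun Y μ) (hL2 : ∀ i, MemLp (Y i) 2 μ)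
    {s : Finset ι} {K B D : ℝ} (hs : (#s : ℝ) ≤ K) (hB : 0 ≤ B) (hD : 0 ≤ D)
    (hmean : ∀ i ∈ s, |∫ ω, Y i ω ∂μ| ≤ B) (hsq : ∀ i ∈ s, ∫ ω, Y i ω ^ 2 ∂μ ≤ D) :
    ∫ ω, (∑ i ∈ s, Y i ω) ^ 2 ∂μ ≤ (K * B) ^ 2 + K * D :=
  calc ∫ ω, (∑ i ∈ s, Y i ω) ^ 2 ∂μ
      ≤ (∑ i ∈ s, ∫ ω, Y i ω ∂μ) ^ 2 + ∑ i ∈ s, ∫ ω, Y i ω ^ 2 ∂μ :=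
        integral_sq_sum_le_of_iIndepFun hY hL2 s
    _ ≤ (#s * B) ^ 2 + #s * D := by
        rw [← sq_abs]
        gcongr
        · exact (abs_sum_le_sum_abs _ _).trans (by simpa using sum_le_card_nsmul _ _ _ hmean)
        · exact (sum_le_card_nsmul _ _ _ hsq).trans_eq (nsmul_eq_mul _ _)
    _ ≤ (K * B) ^ 2 + K * D := by gcongr

lemma le_sup'_univ_fin_of_mem_Icc {α : Type*} [SemilatticeSup α] {M : ℕ} (f : ℝ → α)
    (H : (univ : Finset (Fin M)).Nonempty) {m : ℕ} (h1 : 1 ≤ m) (h2 : m ≤ M) :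
    f m ≤ univ.sup' H fun i : Fin M => f (i.1 + 1) := by
  refine le_of_eq_of_le ?_ (le_sup' _ (mem_univ (⟨m - 1, by omega⟩ : Fin M)))
  rw [Nat.cast_sub h1, Nat.cast_one, sub_add_cancel]

section Poisson

lemma integral_poissonMeasure_eq_sum_range (r : ℝ≥0) {f : ℕ → ℝ} {T : ℕ}
    (hf : ∀ j, T < j → f j = 0) :
    ∫ j, f j ∂poissonMeasure r = ∑ j ∈ range (T + 1), poissonPMFReal r j * f j := by
  rw [integral_poissonMeasure]
  exact tsum_eq_sum fun j hj => by rw [hf j (by simpa using hj), smul_zero]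

lemma poissonPMFReal_zero (r : ℝ≥0) : poissonPMFReal r 0 = Real.exp (-r) := by
  simp [poissonPMFReal]

lemma sum_range_poissonPMFReal_le (r : ℝ≥0) {L : ℕ} (hL : 0 < L) (hLr : (L : ℝ) ≤ r) :
    ∑ j ∈ range (L + 1), poissonPMFReal r j ≤ Real.exp (-r) * (r / L) ^ L * Real.exp L := by
  have hL0 : (0 : ℝ) < L := by exact_mod_cast hL
  have hterm : ∀ j ∈ range (L + 1),
      poissonPMFReal r j ≤ Real.exp (-r) * (r / L) ^ L * ((L : ℝ) ^ j / j.factorial) := by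
    intro j hj
    have hr : (r : ℝ) ^ j = (L : ℝ) ^ j * ((r : ℝ) / L) ^ j := by
      rw [← mul_pow, mul_div_cancel₀ _ hL0.ne']
    have hpow : ((r : ℝ) / L) ^ j ≤ ((r : ℝ) / L) ^ L :=
      pow_le_pow_right₀ ((one_le_div hL0).mpr hLr) (Nat.lt_succ_iff.mp (mem_range.mp hj))
    calc poissonPMFReal r j = Real.exp (-r) * ((r : ℝ) / L) ^ j * ((L : ℝ) ^ j / j.factorial) := by
          rw [poissonPMFReal, hr]
          ring
      _ ≤ _ := by gcongr
  calc ∑ j ∈ range (L + 1), poissonPMFReal r j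
      ≤ ∑ j ∈ range (L + 1), Real.exp (-r) * (r / L) ^ L * ((L : ℝ) ^ j / j.factorial) :=
        sum_le_sum hterm
    _ ≤ Real.exp (-r) * (r / L) ^ L * Real.exp L := by
        rw [← mul_sum]
        gcongr
        exact Real.sum_le_exp_of_nonneg hL0.le _

lemma sum_range_poissonPMFReal_le_of_le (r : ℝ≥0) {L : ℕ} {a : ℝ} (hL : 0 < L)
    (hLa : (L : ℝ) ≤ a) (har : a ≤ r) :
    ∑ j ∈ range (L + 1), poissonPMFReal r j ≤ Real.exp (-a) * (a / L) ^ L * Real.exp L := by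
  have hL0 : (0 : ℝ) < L := by exact_mod_cast hL
  calc ∑ j ∈ range (L + 1), poissonPMFReal r j
      ≤ Real.exp (-r) * (r / L) ^ L * Real.exp L :=
        sum_range_poissonPMFReal_le r hL (hLa.trans har)
    _ = Real.exp (-r) * r ^ L / L ^ L * Real.exp L := by rw [div_pow, mul_div_assoc]
    _ ≤ Real.exp (-a) * a ^ L / L ^ L * Real.exp L := by
        gcongr ?_ / _ * _
        exact exp_neg_mul_pow_le_of_le hLa (hL0.trans_le hLa) har
    _ = Real.exp (-a) * (a / L) ^ L * Real.exp L := by rw [div_pow, mul_div_assoc]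

lemma integral_poissonMeasure_ite_coeff {L : ℕ} (w : Fin L → ℝ) (c : ℝ) {u : ℕ → ℝ}
    (hu : ∀ j : ℕ, u j = if h : 1 ≤ j ∧ j ≤ L
        then w ⟨j - 1, by omega⟩ * (j.factorial : ℝ) * c ^ j else 0) (r : ℝ≥0) :
    ∫ j, (if j = 0 then -1 else u j) ∂poissonMeasure r
      = Real.exp (-r) * ((∑ j : Fin L, (r * c) ^ (j.1 + 1) * w j) - 1) := by
  have hfin : ∀ j, L < j → (if j = 0 then -1 else u j) = 0 := fun j hj => by
    rw [if_neg (by omega), hu, dif_neg (by omega)]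
  have hterm : ∀ j : Fin L, poissonPMFReal r (j + 1) * u (j + 1)
      = Real.exp (-r) * ((r * c) ^ (j.1 + 1) * w j) := fun j => by
    rw [hu, dif_pos ⟨by omega, j.2⟩, poissonPMFReal]
    simp only [Nat.add_sub_cancel, Fin.eta]
    field_simp
    ring
  rw [integral_poissonMeasure_eq_sum_range r hfin, sum_range_succ', sum_range]
  simp only [Nat.add_eq_zero_iff, one_ne_zero, and_false, if_false, if_true, hterm,
    poissonPMFReal_zero, ← mul_sum]
  ring

lemma integral_poissonMeasure_ite_sq {L : ℕ} {u : ℕ → ℝ} (hu0 : u 0 = 0)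
    (hfin : ∀ j, L < j → u j = 0) (r : ℝ≥0) :
    ∫ j, (if j = 0 then -1 else u j) ^ 2 ∂poissonMeasure r
      = Real.exp (-r) + ∑' j, poissonPMFReal r j * u j ^ 2 := by
  have hfin_sq : ∀ j, L < j → (if j = 0 then -1 else u j) ^ 2 = 0 := fun j hj => by
    rw [if_neg (by omega), hfin j hj, sq, mul_zero]
  rw [integral_poissonMeasure_eq_sum_range r hfin_sq, tsum_eq_sum (s := range (L + 1))
      fun j hj => by rw [hfin j (by simpa using hj), sq, mul_zero, mul_zero],
    sum_range_succ', sum_range_succ' (fun j => poissonPMFReal r j * u j ^ 2)]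
  simp [hu0, poissonPMFReal_zero, add_comm]

variable {Ω : Type*} [MeasurableSpace Ω] {μ : Measure Ω} {X : Ω → ℕ}

lemma measureReal_le_eq_sum_poissonPMFReal (hX : Measurable X) {r : ℝ≥0}
    (hlaw : μ.map X = poissonMeasure r) (L : ℕ) :
    μ.real {ω | X ω ≤ L} = ∑ j ∈ range (L + 1), poissonPMFReal r j := by
  have hind : ∀ j, L < j → (Set.Iic L).indicator (1 : ℕ → ℝ) j = 0 := fun j hj =>
    Set.indicator_of_notMem (by simpa using hj) _
  rw [show {ω | X ω ≤ L} = X ⁻¹' Set.Iic L from rfl, ← map_measureReal_apply hX .of_discrete,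
    hlaw, ← integral_indicator_one .of_discrete, integral_poissonMeasure_eq_sum_range r hind]
  refine sum_congr rfl fun j hj => ?_
  rw [Set.indicator_of_mem (by simpa [Nat.lt_succ_iff] using hj), Pi.one_apply, mul_one]

lemma ae_eq_zero_of_map_eq_poissonMeasure_zero (hX : Measurable X)
    (hlaw : μ.map X = poissonMeasure 0) : ∀ᵐ ω ∂μ, X ω = 0 := by
  rw [ae_iff, show {ω | ¬X ω = 0} = X ⁻¹' {0}ᶜ from rfl,
    ← Measure.map_apply hX (MeasurableSet.singleton 0).compl, hlaw,
    prob_compl_eq_zero_iff (MeasurableSet.singleton 0), poissonMeasure_singleton]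
  simp

lemma memLp_comp_of_eq_zero [IsFiniteMeasure μ] (hX : Measurable X) {f : ℕ → ℝ} {T : ℕ}
    (hf : ∀ j, T < j → f j = 0) (p : ENNReal) : MemLp (fun ω => f (X ω)) p μ :=
  .of_bound ((measurable_from_nat (f := f)).comp hX).aestronglyMeasurable _
    (ae_of_all _ fun _ => (Real.norm_eq_abs _).trans_le (abs_le_sum_range_abs_of_eq_zero hf _))

end Poisson

section Estimator

lemma natCast_card_filter_fin_le {k : ℕ} (p : Fin k → Prop) [DecidablePred p] :
    (#{i | p i} : ℝ) ≤ k := by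
  exact_mod_cast (card_filter_le _ _).trans_eq (card_fin k)

variable {k : ℕ} (urn : Fin k → ℕ) (x : Fin k → ℕ)

lemma sum_observed_le_card_support (habsent : ∀ i, urn i = 0 → x i = 0) :
    ∑ i, (if 1 ≤ x i then (1 : ℝ) else 0) ≤ #{i | 0 < urn i} := by
  rw [natCast_card_filter]
  refine sum_le_sum fun i _ => ?_
  by_cases hx : 1 ≤ x i
  · have : 0 < urn i := Nat.pos_of_ne_zero fun h => by simp [habsent i h] at hx
    simp [hx, this]
  · simp only [hx, if_false]
    split_ifs <;> norm_num

lemma sum_sub_card_support_eq {M L : ℕ} {u g : ℕ → ℝ} (hg0 : g 0 = 0)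
    (hg : ∀ j, 1 ≤ j → g j = 1 + u j) (hfin : ∀ j, L < j → u j = 0)
    (habsent : ∀ i, urn i = 0 → x i = 0) (hlarge : ∀ i, M < urn i → L < x i) :
    ∑ i, g (x i) - #{i | 0 < urn i}
      = ∑ i with 0 < urn i ∧ urn i ≤ M, (if x i = 0 then -1 else u (x i)) := by
  have hterm : ∀ i, g (x i) - (if 0 < urn i then 1 else 0)
      = if 0 < urn i ∧ urn i ≤ M then (if x i = 0 then -1 else u (x i)) else 0 := by
    intro i
    rcases Nat.eq_zero_or_pos (urn i) with h0 | hpos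
    · simp [h0, habsent i h0, hg0]
    rcases le_or_gt (urn i) M with hsmall | hbig
    · rw [if_pos hpos, if_pos ⟨hpos, hsmall⟩]
      split_ifs with hx
      · rw [hx, hg0]
        norm_num
      · rw [hg _ (Nat.one_le_iff_ne_zero.mpr hx)]
        ring
    · have hx := hlarge i hbig
      simp [hpos, hg _ (by omega : 1 ≤ x i), hfin _ hx, hbig.not_ge]
  rw [natCast_card_filter, ← sum_sub_distrib, sum_filter]
  exact sum_congr rfl fun i _ => hterm i

lemma sq_estimator_sub_le_of_forall_large {M L : ℕ} {u g : ℕ → ℝ} (hg0 : g 0 = 0)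
    (hg : ∀ j, 1 ≤ j → g j = 1 + u j) (hfin : ∀ j, L < j → u j = 0)
    (habsent : ∀ i, urn i = 0 → x i = 0) (hlarge : ∀ i, M < urn i → L < x i) :
    (min (max (∑ i, g (x i)) (∑ i, if 1 ≤ x i then (1 : ℝ) else 0)) k - #{i | 0 < urn i}) ^ 2
      ≤ (∑ i with 0 < urn i ∧ urn i ≤ M, (if x i = 0 then -1 else u (x i))) ^ 2 := by
  rw [← sum_sub_card_support_eq urn x hg0 hg hfin habsent hlarge, ← sq_abs, ← sq_abs (_ - _)]
  exact pow_le_pow_left₀ (abs_nonneg _)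
    (abs_min_max_sub_le_abs_sub (sum_observed_le_card_support urn x habsent)
      (natCast_card_filter_fin_le _)) 2

end Estimator

section PoissonModel

variable {Ω : Type*} [MeasurableSpace Ω] {μ : Measure Ω} {k n : ℕ}
  (urn : Fin k → ℕ) (N : Fin k → Ω → ℕ)

lemma ae_forall_eq_zero_of_urn_eq_zero (hmeas : ∀ i, Measurable (N i))
    (hdist : ∀ i, μ.map (N i) = poissonMeasure ⟨(n : ℝ) * urn i / k, by positivity⟩) :
    ∀ᵐ ω ∂μ, ∀ i, urn i = 0 → N i ω = 0 := by
  refine ae_all_iff.mpr fun i => ?_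
  by_cases h : urn i = 0
  · have hlaw : μ.map (N i) = poissonMeasure 0 := by
      rw [hdist i]
      congr
      simp [h]
    exact (ae_eq_zero_of_map_eq_poissonMeasure_zero (hmeas i) hlaw).mono fun _ hω _ => hω
  · exact ae_of_all _ fun _ h' => absurd h' h

lemma integral_sq_estimator_sub_le [IsProbabilityMeasure μ] {M L : ℕ}
    (hmeas : ∀ i, Measurable (N i))
    (hdist : ∀ i, μ.map (N i) = poissonMeasure ⟨(n : ℝ) * urn i / k, by positivity⟩)
    {u g : ℕ → ℝ} (hg0 : g 0 = 0) (hg : ∀ j, 1 ≤ j → g j = 1 + u j)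
    (hfin : ∀ j, L < j → u j = 0) :
    ∫ ω, (min (max (∑ i, g (N i ω)) (∑ i, if 1 ≤ N i ω then (1 : ℝ) else 0)) k
        - #{i | 0 < urn i}) ^ 2 ∂μ
      ≤ ∫ ω, (∑ i with 0 < urn i ∧ urn i ≤ M, (if N i ω = 0 then -1 else u (N i ω))) ^ 2 ∂μ
        + μ.real (⋃ i ∈ ({i | M < urn i} : Finset (Fin k)), {ω | N i ω ≤ L}) * k ^ 2 := by
  set bad : Set Ω := ⋃ i ∈ ({i | M < urn i} : Finset (Fin k)), {ω | N i ω ≤ L}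
  have hbad : MeasurableSet bad :=
    .biUnion (Set.to_countable _) fun i _ => measurableSet_le (hmeas i) measurable_const
  have hpointwise : ∀ᵐ ω ∂μ,
      (min (max (∑ i, g (N i ω)) (∑ i, if 1 ≤ N i ω then (1 : ℝ) else 0)) k
        - #{i | 0 < urn i}) ^ 2
      ≤ (∑ i with 0 < urn i ∧ urn i ≤ M, (if N i ω = 0 then -1 else u (N i ω))) ^ 2
        + bad.indicator (fun _ => (k : ℝ) ^ 2) ω := by
    filter_upwards [ae_forall_eq_zero_of_urn_eq_zero urn N hmeas hdist] with ω hω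
    by_cases hω_bad : ω ∈ bad
    · rw [Set.indicator_of_mem hω_bad]
      refine (sq_min_max_sub_le_sq (sum_nonneg fun _ _ => by positivity) (Nat.cast_nonneg _)
        (natCast_card_filter_fin_le (0 < urn ·))).trans (le_add_of_nonneg_left (sq_nonneg _))
    · rw [Set.indicator_of_notMem hω_bad, add_zero]
      refine sq_estimator_sub_le_of_forall_large urn (N · ω) hg0 hg hfin hω fun i hi => ?_
      by_contra! hle
      exact hω_bad (Set.mem_biUnion (by simpa using hi) hle)
  have hφfin : ∀ j, L < j → (if j = 0 then -1 else u j) = 0 := fun j hj => by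
    rw [if_neg (by omega), hfin j hj]
  have hX2 : Integrable (fun ω =>
      (∑ i with 0 < urn i ∧ urn i ≤ M, (if N i ω = 0 then -1 else u (N i ω))) ^ 2) μ :=
    (memLp_finsetSum _ fun i _ => memLp_comp_of_eq_zero (hmeas i) hφfin 2).integrable_sq
  have hI : Integrable (bad.indicator fun _ => (k : ℝ) ^ 2) μ := (integrable_const _).indicator hbad
  rw [← smul_eq_mul, ← integral_indicator_const _ hbad, ← integral_add hX2 hI]
  exact integral_mono_of_nonneg (ae_of_all _ fun _ => sq_nonneg _) (hX2.add hI) hpointwise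

lemma integral_sq_sum_small_le [IsProbabilityMeasure μ] (hk : 0 < k) (hn : 0 < n) {M L : ℕ}
    (hM : 0 < M) (hmeas : ∀ i, Measurable (N i)) (hindep : iIndepFun N μ)
    (hdist : ∀ i, μ.map (N i) = poissonMeasure ⟨(n : ℝ) * urn i / k, by positivity⟩)
    (w : Fin L → ℝ) {u : ℕ → ℝ}
    (hu : ∀ j : ℕ, u j = if h : 1 ≤ j ∧ j ≤ L
        then w ⟨j - 1, by omega⟩ * (j.factorial : ℝ) * ((k : ℝ) / (n * M)) ^ j else 0)
    {ε V : ℝ}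
    (hε : ∀ m : ℕ, 1 ≤ m → m ≤ M → |(∑ j : Fin L, ((m : ℝ) / M) ^ (j.1 + 1) * w j) - 1| ≤ ε)
    (hV : ∀ m : ℕ, 1 ≤ m → m ≤ M →
      ∑' j, poissonPMFReal ⟨(n : ℝ) * m / k, by positivity⟩ j * u j ^ 2 ≤ V) :
    ∫ ω, (∑ i with 0 < urn i ∧ urn i ≤ M, (if N i ω = 0 then -1 else u (N i ω))) ^ 2 ∂μ
      ≤ (k : ℝ) ^ 2 * Real.exp (-(2 * n / k)) * ε ^ 2 + k * (Real.exp (-(n : ℝ) / k) + V) := by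
  set φ : ℕ → ℝ := fun j => if j = 0 then -1 else u j
  set small : Finset (Fin k) := {i | 0 < urn i ∧ urn i ≤ M}
  have hfin : ∀ j, L < j → u j = 0 := fun j hj => by rw [hu, dif_neg (by omega)]
  have hφfin : ∀ j, L < j → φ j = 0 := fun j hj => by
    simp only [φ, if_neg (show j ≠ 0 by omega), hfin j hj]
  have hlaw : ∀ i (f : ℕ → ℝ),
      ∫ ω, f (N i ω) ∂μ = ∫ j, f j ∂poissonMeasure ⟨(n : ℝ) * urn i / k, by positivity⟩ := by
    intro i f
    rw [← hdist i, integral_map (hmeas i).aemeasurable .of_discrete]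
  have hrate : ∀ i ∈ small, Real.exp (-((n : ℝ) * urn i / k)) ≤ Real.exp (-(n : ℝ) / k) := by
    intro i hi
    have : (1 : ℝ) ≤ urn i := by exact_mod_cast (mem_filter.mp hi).2.1
    rw [Real.exp_le_exp, neg_div, neg_le_neg_iff]
    gcongr
    exact le_mul_of_one_le_right (by positivity) this
  have hbias : ∀ i ∈ small, |∫ ω, φ (N i ω) ∂μ| ≤ Real.exp (-(n : ℝ) / k) * ε := by
    intro i hi
    have hscale : (n : ℝ) * urn i / k * (k / (n * M)) = urn i / M := by field_simp
    have hmean : ∫ ω, φ (N i ω) ∂μ = Real.exp (-((n : ℝ) * urn i / k))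
        * ((∑ j : Fin L, ((urn i : ℝ) / M) ^ (j.1 + 1) * w j) - 1) := by
      rw [hlaw, ← hscale]
      exact integral_poissonMeasure_ite_coeff w _ hu _
    rw [hmean, abs_mul, Real.abs_exp]
    exact mul_le_mul (hrate i hi) (hε _ (mem_filter.mp hi).2.1 (mem_filter.mp hi).2.2)
      (abs_nonneg _) (Real.exp_pos _).le
  have hsq : ∀ i ∈ small, ∫ ω, φ (N i ω) ^ 2 ∂μ ≤ Real.exp (-(n : ℝ) / k) + V := by
    intro i hi
    rw [hlaw i (φ · ^ 2)]
    refine (integral_poissonMeasure_ite_sq (by simp [hu]) hfin _).trans_le ?_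
    exact add_le_add (hrate i hi) (hV _ (mem_filter.mp hi).2.1 (mem_filter.mp hi).2.2)
  have hε0 : 0 ≤ ε := (abs_nonneg _).trans (hε 1 le_rfl hM)
  have hV0 : 0 ≤ V := (tsum_nonneg fun j => mul_nonneg poissonPMFReal_nonneg (sq_nonneg _)).trans
    (hV 1 le_rfl hM)
  calc ∫ ω, (∑ i ∈ small, φ (N i ω)) ^ 2 ∂μ
      ≤ (k * (Real.exp (-(n : ℝ) / k) * ε)) ^ 2 + k * (Real.exp (-(n : ℝ) / k) + V) :=
        integral_sq_sum_le_of_iIndepFun_of_le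
          (hindep.comp (fun _ => φ) fun _ => measurable_from_nat)
          (fun i => memLp_comp_of_eq_zero (hmeas i) hφfin 2) (natCast_card_filter_fin_le _)
          (by positivity) (by positivity) hbias hsq
    _ = (k : ℝ) ^ 2 * Real.exp (-(2 * n / k)) * ε ^ 2 + k * (Real.exp (-(n : ℝ) / k) + V) := by
        rw [mul_pow, mul_pow, ← Real.exp_nat_mul]
        ring_nf

lemma measureReal_biUnion_large_le {M L : ℕ} (hL : 0 < L) (hmeas : ∀ i, Measurable (N i))
    (hdist : ∀ i, μ.map (N i) = poissonMeasure ⟨(n : ℝ) * urn i / k, by positivity⟩)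
    (hLa : (L : ℝ) ≤ n * M / k) :
    μ.real (⋃ i ∈ ({i | M < urn i} : Finset (Fin k)), {ω | N i ω ≤ L})
      ≤ k * (Real.exp (-(n * M / k)) * ((n * M / k) / L) ^ L * Real.exp L) := by
  have hlarge : ∀ i ∈ ({i | M < urn i} : Finset (Fin k)),
      μ.real {ω | N i ω ≤ L} ≤ Real.exp (-(n * M / k)) * ((n * M / k) / L) ^ L * Real.exp L := by
    intro i hi
    rw [measureReal_le_eq_sum_poissonPMFReal (hmeas i) (hdist i)]
    refine sum_range_poissonPMFReal_le_of_le _ hL hLa ?_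
    have : (M : ℝ) ≤ urn i := by exact_mod_cast (mem_filter.mp hi).2.le
    show (n : ℝ) * M / k ≤ n * urn i / k
    gcongr
  calc μ.real (⋃ i ∈ ({i | M < urn i} : Finset (Fin k)), {ω | N i ω ≤ L})
      ≤ ∑ i ∈ ({i | M < urn i} : Finset (Fin k)), μ.real {ω | N i ω ≤ L} :=
        measureReal_biUnion_finset_le _ _
    _ ≤ #({i | M < urn i} : Finset (Fin k))
          * (Real.exp (-(n * M / k)) * ((n * M / k) / L) ^ L * Real.exp L) :=
        (sum_le_card_nsmul _ _ _ hlarge).trans_eq (nsmul_eq_mul _ _)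
    _ ≤ k * (Real.exp (-(n * M / k)) * ((n * M / k) / L) ^ L * Real.exp L) :=
        mul_le_mul_of_nonneg_right (natCast_card_filter_fin_le (M < urn ·)) (by positivity)

end PoissonModel

/-- Poisson sampling model with mean sample size `n` from a `k`-ball urn
`(urn i)_i` (`Σ urn i = k`), with `C` the number of distinct colors and histogram counts
`N_i ~ Poisson(n·urn i/k)` independent. With `L = α log k`, `M = β k log k / n` positive
integers (`β > α > 0`), coefficients `u_j = w_j · j! · (k/(nM))^j` for `1 ≤ j ≤ L` (else `0`),
estimator `C̃ = Σ_i g(N_i)` where `g(0)=0`, `g(j)=1+u_j`, and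
`Ĉ = min(max(C̃, #{i : N_i ≥ 1}), k)`, one has
`E[(Ĉ − C)²] ≤ k²·e^{−2n/k}·‖Bw − 𝟏‖_∞² + k·e^{−n/k}
  + k·max_{m∈[M]} E_{N~Poi(nm/k)}[u_N²] + k^{−(β − α log(eβ/α) − 3)}`. -/
theorem stmt10
    (k n : ℕ) (hk : 1 ≤ k) (hn : 1 ≤ n)
    (α β : ℝ) (hα : 0 < α) (hαβ : α < β)
    (L M : ℕ) (hL : 1 ≤ L) (hM : 1 ≤ M)
    (hLdef : (L : ℝ) = α * Real.log k)
    (hMdef : (M : ℝ) = β * k * Real.log k / n)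
    (w : Fin L → ℝ) (u : ℕ → ℝ)
    (hu : ∀ j : ℕ, u j = if h : 1 ≤ j ∧ j ≤ L
        then w ⟨j - 1, by omega⟩ * (j.factorial : ℝ) * ((k : ℝ) / (n * M)) ^ j
        else 0)
    (urn : Fin k → ℕ)
    (C : ℕ) (hC : C = (Finset.univ.filter (fun i => 0 < urn i)).card)
    {Ω : Type*} [MeasurableSpace Ω] (μ : Measure Ω) [IsProbabilityMeasure μ]
    (N : Fin k → Ω → ℕ)
    (hmeas : ∀ i, Measurable (N i))
    (hindep : iIndepFun N μ)
    (hdist : ∀ i, μ.map (N i) = poissonMeasure ⟨(n : ℝ) * urn i / k, by positivity⟩)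
    (g : ℕ → ℝ) (hg0 : g 0 = 0) (hg : ∀ j, 1 ≤ j → g j = 1 + u j)
    (Ctilde : Ω → ℝ) (hCt : ∀ ω, Ctilde ω = ∑ i, g (N i ω))
    (Chat : Ω → ℝ)
    (hCh : ∀ ω, Chat ω
        = min (max (Ctilde ω) (∑ i, if 1 ≤ N i ω then (1 : ℝ) else 0)) k) :
    ∫ ω, (Chat ω - C) ^ 2 ∂μ
      ≤ (k : ℝ) ^ 2 * Real.exp (-(2 * n / k)) *
          (Finset.univ.sup' (Finset.univ_nonempty_iff.mpr ⟨⟨0, by omega⟩⟩)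
            (fun i : Fin M =>
              |(∑ j : Fin L, ((i.1 + 1 : ℝ) / M) ^ (j.1 + 1) * w j) - 1|)) ^ 2
        + k * Real.exp (-(n : ℝ) / k)
        + k * ((Finset.Icc 1 M).sup' (Finset.nonempty_Icc.mpr hM)
            (fun m : ℕ =>
              ∑' j : ℕ, poissonPMFReal ⟨(n : ℝ) * m / k, by positivity⟩ j * (u j) ^ 2))
        + (k : ℝ) ^ (-(β - α * Real.log (Real.exp 1 * β / α) - 3)) := by
  subst hC
  have hlogk : 0 < Real.log k :=
    pos_of_mul_pos_right (hLdef ▸ (by exact_mod_cast hL : (0 : ℝ) < L)) hα.le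
  have hrate : (n : ℝ) * M / k = β * Real.log k := by
    rw [hMdef]
    field_simp
  have hfin : ∀ j, L < j → u j = 0 := fun j hj => by rw [hu, dif_neg (by omega)]
  have hChat : Chat = fun ω =>
      min (max (∑ i, g (N i ω)) (∑ i, if 1 ≤ N i ω then (1 : ℝ) else 0)) k :=
    funext fun ω => by rw [hCh, hCt]
  have herror := integral_sq_estimator_sub_le urn N (M := M) hmeas hdist hg0 hg hfin
  have hsmall := integral_sq_sum_small_le urn N hk hn hM hmeas hindep hdist w hu
    (fun m h1 h2 => le_sup'_univ_fin_of_mem_Icc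
      (fun x : ℝ => |(∑ j : Fin L, (x / M) ^ (j.1 + 1) * w j) - 1|)
      (univ_nonempty_iff.mpr ⟨⟨0, hM⟩⟩) h1 h2)
    (fun m h1 h2 => (sup'_le_iff (nonempty_Icc.mpr hM)
      (fun m : ℕ => ∑' j, poissonPMFReal ⟨(n : ℝ) * m / k, by positivity⟩ j * u j ^ 2)).1
        le_rfl m (mem_Icc.mpr ⟨h1, h2⟩))
  have hbad := measureReal_biUnion_large_le urn N (M := M) hL hmeas hdist
    (by rw [hLdef, hrate]; exact mul_le_mul_of_nonneg_right hαβ.le hlogk.le)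
  rw [hrate] at hbad
  have htail := pow_three_mul_exp_neg_mul_div_pow_eq_rpow (by positivity : (0 : ℝ) < k) hα
    (hα.trans hαβ) hLdef hlogk.ne'
  rw [hChat]
  linarith [mul_le_mul_of_nonneg_right hbad (sq_nonneg (k : ℝ))]
end

section
/- There exists an absolute constant c > 0 such that for all integers k ≥ 1, 1 ≤ Δ ≤ k/2, and n, if n ≤ c·(k − 2Δ)/√k, then for every estimator Ĉ : (Fin k)^n → ℤ there exists a coloring f : Fin k → Fin k such that, letting C(f) be the number of distinct values of f and X_1,…,X_n be i.i.d. uniform on Fin k, one has P( |Ĉ(f(X_1),…,f(X_n)) − C(f)| ≥ Δ ) > 0.1. -/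
open Finset MeasureTheory ProbabilityTheory Function Fintype Equiv
open scoped ENNReal NNReal

/-!
Symmetrized two-point argument. Compare the colorings `σ` (all `k` colors) and `σ ∘ g`, where
`g i = i mod r` has at most `r = k - 2Δ + 1` colors, over all relabelings `σ` of the colors: an
estimate within `Δ` of `k` is at least `Δ` away from any count `≤ r`. As `4 n² ≤ r`, a birthday
bound shows that under either coloring the `n` observed colors are pairwise distinct with
probability at least `1/2`. For an injective observed sequence `v`, the number of `σ` for which
`σ ∘ v` has a given property does not depend on `v`, so it equals the number for a fixed injective
`w₀`. Hence if the estimator erred with probability at most `1/10` for every coloring, at most a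
fifth of all `σ` would have `Ĉ(σ ∘ w₀)` far from `k`, and at most a fifth close to `k`.
-/

variable {ι α β : Type*}

section Sampling

variable [Fintype ι] [DecidableEq ι] [Fintype β]

lemma ten_mul_card_le_of_measure_pi_le [MeasurableSpace β] [MeasurableSingletonClass β]
    [Nonempty β] (P : (ι → β) → Prop) [DecidablePred P]
    (h : Measure.pi (fun _ : ι => uniformOn (Set.univ : Set β)) {x | P x} ≤ 1 / 10) :
    10 * #{x | P x} ≤ card β ^ card ι := by
  rw [← uniformOn_pi, Set.pi_univ, uniformOn_univ,
    Measure.count_apply_finite _ (Set.toFinite _), Fintype.card_pi, prod_const, card_univ,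
    ENNReal.div_le_iff (by simp) (by simp), Set.toFinite_toFinset, Set.toFinset_ofPred] at h
  have h10 : (10 : ℝ≥0∞) * (1 / 10) = 1 := ENNReal.mul_div_cancel (by norm_num) (by norm_num)
  have : (10 : ℝ≥0∞) * #{x | P x} ≤ 10 * (1 / 10 * (card β ^ card ι : ℕ)) := by gcongr
  rw [← mul_assoc, h10, one_mul] at this
  exact_mod_cast this

def pairSplitEquiv (i j : ι) (hij : i ≠ j) :
    (ι → β) ≃ (β × β) × ({t : ι // t ≠ i ∧ t ≠ j} → β) where
  toFun x := ((x i, x j), fun t => x t)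
  invFun p t := if hi : t = i then p.1.1 else if hj : t = j then p.1.2 else p.2 ⟨t, hi, hj⟩
  left_inv x := by
    funext t
    by_cases hi : t = i
    · simp [hi]
    · by_cases hj : t = j
      · subst hj; simp [hi]
      · simp [hi, hj]
  right_inv := by
    rintro ⟨⟨a, b⟩, y⟩
    refine Prod.ext (Prod.ext ?_ ?_) ?_
    · simp
    · simp [hij.symm]
    · ext t; simp [t.2.1, t.2.2]

lemma card_filter_rel_apply_mul_card_sq (R : β → β → Prop) [DecidableRel R] {i j : ι} (hij : i ≠ j) :
    #{x : ι → β | R (x i) (x j)} * card β ^ 2 = #{p : β × β | R p.1 p.2} * card β ^ card ι := by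
  have htotal : card β ^ card ι = card β ^ 2 * card ({t : ι // t ≠ i ∧ t ≠ j} → β) := by
    simpa [sq] using Fintype.card_congr (pairSplitEquiv (β := β) i j hij)
  have hR : #{x : ι → β | R (x i) (x j)}
      = #{p : β × β | R p.1 p.2} * card ({t : ι // t ≠ i ∧ t ≠ j} → β) := by
    rw [← Fintype.card_subtype, ← Fintype.card_subtype, ← Fintype.card_prod]
    exact Fintype.card_congr (((pairSplitEquiv i j hij).subtypeEquiv
      (q := fun q => R q.1.1 q.1.2) fun _ => Iff.rfl).trans
      (Equiv.prodSubtypeFstEquivSubtypeProd (p := fun p : β × β => R p.1 p.2)))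
  rw [hR, htotal]
  ring

lemma card_not_injective_comp_mul_le [DecidableEq α] (h : β → α) :
    #{x : ι → β | ¬Injective (h ∘ x)} * card β ^ 2
      ≤ card ι ^ 2 * #{p : β × β | h p.1 = h p.2} * card β ^ card ι := by
  classical
  have hcover : ({x : ι → β | ¬Injective (h ∘ x)} : Finset (ι → β))
      ⊆ univ.offDiag.biUnion fun st => {x : ι → β | h (x st.1) = h (x st.2)} := by
    intro x hx
    obtain ⟨s, t, hst, hne⟩ := Function.not_injective_iff.mp (mem_filter.mp hx).2
    exact mem_biUnion.mpr ⟨(s, t), by simpa using hne, by simpa using hst⟩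
  calc #{x : ι → β | ¬Injective (h ∘ x)} * card β ^ 2
      ≤ (∑ st ∈ univ.offDiag, #{x : ι → β | h (x st.1) = h (x st.2)}) * card β ^ 2 := by
        gcongr
        exact (card_le_card hcover).trans card_biUnion_le
    _ = ∑ _st ∈ (univ : Finset ι).offDiag, #{p : β × β | h p.1 = h p.2} * card β ^ card ι := by
        rw [sum_mul]
        refine sum_congr rfl fun st hst => ?_
        exact card_filter_rel_apply_mul_card_sq (fun a b => h a = h b) (mem_offDiag.mp hst).2.2
    _ ≤ card ι ^ 2 * #{p : β × β | h p.1 = h p.2} * card β ^ card ι := by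
        rw [sum_const, smul_eq_mul, offDiag_card, card_univ, mul_assoc]
        gcongr
        exact (Nat.sub_le _ _).trans_eq (sq _).symm

lemma card_filter_comp_eq_le [DecidableEq α] (h : β → α) {s : ℕ}
    (hs : ∀ b, #{b' | h b' = h b} ≤ s) :
    #{p : β × β | h p.1 = h p.2} ≤ card β * s := by
  calc #{p : β × β | h p.1 = h p.2} = ∑ b, #{b' | h b' = h b} := by
        simp only [card_filter, Fintype.sum_prod_type, eq_comm]
    _ ≤ ∑ _b : β, s := sum_le_sum fun b _ => hs b
    _ = card β * s := by simp

lemma card_pow_le_two_mul_card_injective_comp [DecidableEq α] [Nonempty β] (h : β → α) {s : ℕ}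
    (hs : ∀ b, #{b' | h b' = h b} ≤ s) (hsmall : 2 * card ι ^ 2 * s ≤ card β) :
    card β ^ card ι ≤ 2 * #{x : ι → β | Injective (h ∘ x)} := by
  have hcollide : 2 * #{x : ι → β | ¬Injective (h ∘ x)} ≤ card β ^ card ι := by
    refine Nat.le_of_mul_le_mul_right ?_ (pow_pos (card_pos (α := β)) 2)
    calc 2 * #{x : ι → β | ¬Injective (h ∘ x)} * card β ^ 2
        ≤ 2 * (card ι ^ 2 * #{p : β × β | h p.1 = h p.2} * card β ^ card ι) := by
          rw [mul_assoc]; exact Nat.mul_le_mul_left 2 (card_not_injective_comp_mul_le h)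
      _ ≤ 2 * (card ι ^ 2 * (card β * s) * card β ^ card ι) := by
          gcongr; exact card_filter_comp_eq_le h hs
      _ = (2 * card ι ^ 2 * s) * card β * card β ^ card ι := by ring
      _ ≤ card β * card β * card β ^ card ι := by gcongr
      _ = card β ^ card ι * card β ^ 2 := by ring
  have hsplit := card_filter_add_card_filter_not (s := (univ : Finset (ι → β)))
    fun x => Injective (h ∘ x)
  rw [card_univ, Fintype.card_fun] at hsplit
  omega

end Sampling

section Relabeling

variable [Fintype α] [DecidableEq α]

lemma card_filter_perm_comp_eq [Finite ι] (Q : (ι → α) → Prop) [DecidablePred Q] {w w' : ι → α}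
    (hw : Injective w) (hw' : Injective w') :
    #{σ : Perm α | Q (σ ∘ w)} = #{σ : Perm α | Q (σ ∘ w')} := by
  obtain ⟨ρ, hρ⟩ := Perm.exists_extending_pair w' w hw' hw
  refine card_equiv (Equiv.mulRight ρ) fun σ => ?_
  have hcomp : ⇑(σ * ρ) ∘ w' = σ ∘ w := funext fun t => by simp [hρ]
  simp only [mem_filter, mem_univ, true_and, coe_mulRight, hcomp]

variable [Fintype ι] [DecidableEq ι] [Fintype β]

lemma sum_card_injective_comp_and_perm (h : β → α) (Q : (ι → α) → Prop) [DecidablePred Q]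
    {w₀ : ι → α} (hw₀ : Injective w₀) :
    ∑ σ : Perm α, #{x : ι → β | Injective (h ∘ x) ∧ Q (σ ∘ h ∘ x)}
      = #{x : ι → β | Injective (h ∘ x)} * #{σ : Perm α | Q (σ ∘ w₀)} := by
  calc ∑ σ : Perm α, #{x : ι → β | Injective (h ∘ x) ∧ Q (σ ∘ h ∘ x)}
      = ∑ σ : Perm α, ∑ x ∈ {x : ι → β | Injective (h ∘ x)}, if Q (σ ∘ h ∘ x) then 1 else 0 := by
        simp only [← filter_filter, card_filter]
    _ = ∑ x ∈ {x : ι → β | Injective (h ∘ x)}, #{σ : Perm α | Q (σ ∘ h ∘ x)} := by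
        rw [sum_comm]; simp only [card_filter]
    _ = ∑ _x ∈ {x : ι → β | Injective (h ∘ x)}, #{σ : Perm α | Q (σ ∘ w₀)} :=
        sum_congr rfl fun x hx => card_filter_perm_comp_eq Q (mem_filter.mp hx).2 hw₀
    _ = _ := by rw [sum_const, smul_eq_mul]

lemma five_mul_card_filter_perm_le [Nonempty β] (h : β → α) (Q : (ι → α) → Prop)
    [DecidablePred Q] {w₀ : ι → α} (hw₀ : Injective w₀)
    (hinj : card β ^ card ι ≤ 2 * #{x : ι → β | Injective (h ∘ x)})
    (herr : ∀ σ : Perm α, 10 * #{x : ι → β | Q (σ ∘ h ∘ x)} ≤ card β ^ card ι) :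
    5 * #{σ : Perm α | Q (σ ∘ w₀)} ≤ card (Perm α) := by
  set I := #{x : ι → β | Injective (h ∘ x)}
  have hI : 0 < I := by
    have : 0 < card β ^ card ι := pow_pos card_pos _
    omega
  refine Nat.le_of_mul_le_mul_right ?_ (Nat.mul_pos (by norm_num : 0 < 2) hI)
  calc 5 * #{σ : Perm α | Q (σ ∘ w₀)} * (2 * I)
      = ∑ σ : Perm α, 10 * #{x : ι → β | Injective (h ∘ x) ∧ Q (σ ∘ h ∘ x)} := by
        rw [← mul_sum, sum_card_injective_comp_and_perm h Q hw₀]; ring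
    _ ≤ ∑ _σ : Perm α, card β ^ card ι := by
        refine sum_le_sum fun σ _ => le_trans ?_ (herr σ)
        gcongr with x
        exact And.right
    _ ≤ card (Perm α) * (2 * I) := by
        rw [sum_const, card_univ, smul_eq_mul]
        gcongr

end Relabeling

section ModColoring

variable {k r : ℕ}

def modColoring (hr : 0 < r) (hrk : r ≤ k) (i : Fin k) : Fin k :=
  ⟨i % r, (Nat.mod_lt _ hr).trans_le hrk⟩

lemma card_image_modColoring_le (hr : 0 < r) (hrk : r ≤ k) :
    #(univ.image (modColoring hr hrk)) ≤ r :=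
  calc #(univ.image (modColoring hr hrk)) ≤ #{a : Fin k | (a : ℕ) < r} :=
        card_le_card fun a ha => by
          obtain ⟨i, -, rfl⟩ := mem_image.mp ha
          simpa [modColoring] using Nat.mod_lt i hr
    _ = min k r := Fin.card_filter_val_lt
    _ ≤ r := min_le_right _ _

lemma card_fiber_modColoring_le (hr : 0 < r) (hrk : r ≤ k) (a : Fin k) :
    #{b | modColoring hr hrk b = modColoring hr hrk a} ≤ k / r + 1 := by
  have hmaps : ∀ b ∈ ({b | modColoring hr hrk b = modColoring hr hrk a} : Finset (Fin k)),
      (b : ℕ) / r ∈ range (k / r + 1) :=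
    fun b _ => mem_range.mpr (Nat.lt_succ_of_le (Nat.div_le_div_right b.2.le))
  have hinj : Set.InjOn (fun b : Fin k => (b : ℕ) / r)
      ({b | modColoring hr hrk b = modColoring hr hrk a} : Finset (Fin k)) := by
    intro b hb b' hb' hdiv
    simp only [coe_filter, mem_univ, true_and, Set.mem_ofPred_eq, modColoring, Fin.mk.injEq]
      at hb hb'
    exact Fin.ext (Nat.ext_div_modEq hdiv (hb.trans hb'.symm))
  simpa using card_le_card_of_injOn _ hmaps hinj

end ModColoring

lemma four_mul_sq_le_of_le_half_div_sqrt {n k m : ℕ} (hk : 0 < k) (hm : m ≤ k)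
    (h : (n : ℝ) ≤ 1 / 2 * m / √k) : 4 * n ^ 2 ≤ m := by
  have hsqrt : 0 < √(k : ℝ) := Real.sqrt_pos.mpr (by exact_mod_cast hk)
  have hnk : 2 * n * √k ≤ m := by rw [le_div_iff₀ hsqrt] at h; linarith
  have hsq : (4 * n ^ 2 : ℝ) * k ≤ m * k :=
    calc (4 * n ^ 2 : ℝ) * k = (2 * n * √k) ^ 2 := by
          rw [mul_pow, Real.sq_sqrt (Nat.cast_nonneg k)]; ring
      _ ≤ (m : ℝ) ^ 2 := pow_le_pow_left₀ (by positivity) hnk 2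
      _ ≤ m * k := by rw [sq]; gcongr
  exact_mod_cast le_of_mul_le_mul_right hsq (by exact_mod_cast hk)

section Estimator

variable {k n Δ : ℕ} (Chat : (Fin n → Fin k) → ℤ)

lemma five_mul_card_perm_far_le
    (herr : ∀ f : Fin k → Fin k,
      10 * #{x : Fin n → Fin k | (Δ : ℤ) ≤ |Chat (fun t => f (x t)) - #(univ.image f)|} ≤ k ^ n)
    (hk : 0 < k) (hn : 2 * n ^ 2 ≤ k) {w₀ : Fin n → Fin k} (hw₀ : Injective w₀) :
    5 * #{σ : Perm (Fin k) | (Δ : ℤ) ≤ |Chat (σ ∘ w₀) - k|} ≤ card (Perm (Fin k)) := by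
  have : Nonempty (Fin k) := ⟨⟨0, hk⟩⟩
  refine five_mul_card_filter_perm_le id (fun y => (Δ : ℤ) ≤ |Chat y - k|) hw₀ ?_ fun σ => ?_
  · exact card_pow_le_two_mul_card_injective_comp id (s := 1) (fun b => by simp [filter_eq'])
      (by simpa using hn)
  · rw [Fintype.card_fin, Fintype.card_fin]
    refine le_trans (Nat.mul_le_mul_left 10 (card_le_card (monotone_filter_right _ ?_))) (herr σ)
    intro x _ hfar
    rwa [image_univ_equiv, card_univ, Fintype.card_fin]

lemma five_mul_card_perm_close_le
    (herr : ∀ f : Fin k → Fin k,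
      10 * #{x : Fin n → Fin k | (Δ : ℤ) ≤ |Chat (fun t => f (x t)) - #(univ.image f)|} ≤ k ^ n)
    {r : ℕ} (hr : 0 < r) (hrk : r ≤ k) (hrΔ : r + 2 * Δ ≤ k + 1)
    (hn : 4 * n ^ 2 ≤ r) {w₀ : Fin n → Fin k} (hw₀ : Injective w₀) :
    5 * #{σ : Perm (Fin k) | |Chat (σ ∘ w₀) - k| < Δ} ≤ card (Perm (Fin k)) := by
  have : Nonempty (Fin k) := ⟨⟨0, hr.trans_le hrk⟩⟩
  set g := modColoring hr hrk
  refine five_mul_card_filter_perm_le g (fun y => |Chat y - k| < Δ) hw₀ ?_ fun σ => ?_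
  · refine card_pow_le_two_mul_card_injective_comp g (card_fiber_modColoring_le hr hrk) ?_
    have := Nat.div_mul_le_self k r
    simp only [Fintype.card_fin]
    nlinarith
  · rw [Fintype.card_fin, Fintype.card_fin]
    refine le_trans (Nat.mul_le_mul_left 10 (card_le_card (monotone_filter_right _ ?_)))
      (herr (σ ∘ g))
    intro x _ hclose
    have hcard : #(univ.image (σ ∘ g)) ≤ r := by
      rw [← image_image]
      exact card_image_le.trans (card_image_modColoring_le hr hrk)
    have hclose' : |Chat (fun t => (σ ∘ g) (x t)) - k| < Δ := hclose
    rw [abs_lt] at hclose'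
    rw [le_abs]
    omega

end Estimator

/-- There is an absolute constant `c > 0` such that for all integers `k ≥ 1`,
`1 ≤ Δ ≤ k/2`, and `n` with `n ≤ c·(k − 2Δ)/√k`: for every estimator `Ĉ : (Fin k)^n → ℤ`
there is a coloring `f : Fin k → Fin k` such that, with `C(f)` the number of distinct values
of `f` and `X_1,…,X_n` i.i.d. uniform on `Fin k` (so that the sampled colors
`(f(X_1),…,f(X_n))` are distributed according to the product of uniform measures),
`P(|Ĉ(f(X_1),…,f(X_n)) − C(f)| ≥ Δ) > 0.1`. -/
theorem stmt12 : ∃ c : ℝ, 0 < c ∧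
    ∀ k Δ n : ℕ, 1 ≤ k → 1 ≤ Δ → 2 * Δ ≤ k →
      (n : ℝ) ≤ c * ((k : ℝ) - 2 * Δ) / Real.sqrt k →
      ∀ Chat : (Fin n → Fin k) → ℤ,
        ∃ f : Fin k → Fin k,
          (1 / 10 : ℝ≥0∞) <
            Measure.pi (fun _ : Fin n => uniformOn (Set.univ : Set (Fin k)))
              {x : Fin n → Fin k |
                (Δ : ℤ) ≤ |Chat (fun t => f (x t)) - ((Finset.univ.image f).card : ℤ)|} := by
  refine ⟨1 / 2, by norm_num, fun k Δ n hk hΔ hΔk hn Chat => ?_⟩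
  by_contra! hcon
  have : Nonempty (Fin k) := ⟨⟨0, hk⟩⟩
  have herr (f : Fin k → Fin k) :
      10 * #{x : Fin n → Fin k | (Δ : ℤ) ≤ |Chat (fun t => f (x t)) - #(univ.image f)|} ≤ k ^ n := by
    simpa only [Fintype.card_fin] using ten_mul_card_le_of_measure_pi_le _ (hcon f)
  have hn2 : 4 * n ^ 2 ≤ k - 2 * Δ := four_mul_sq_le_of_le_half_div_sqrt hk (Nat.sub_le _ _)
    (by rwa [Nat.cast_sub hΔk, Nat.cast_mul, Nat.cast_ofNat])
  have hnk : n ≤ k := by nlinarith [Nat.sub_le k (2 * Δ)]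
  have hw₀ : Injective (Fin.castLE hnk : Fin n → Fin k) := Fin.castLE_injective _
  have hfar := five_mul_card_perm_far_le Chat herr hk (by omega) hw₀
  have hclose := five_mul_card_perm_close_le Chat herr (r := k - 2 * Δ + 1) (Nat.succ_pos _)
    (by omega) (by omega) (by omega) hw₀
  have hsplit := card_filter_add_card_filter_not (s := (univ : Finset (Perm (Fin k))))
    fun σ => |Chat (σ ∘ Fin.castLE hnk) - k| < Δ
  simp only [not_lt, card_univ] at hsplit
  have : 0 < card (Perm (Fin k)) := card_pos
  omega
end

section
/- Let X be a finite set, Q a probability mass function on X with Q(x) > 0 for all x, Θ a finite set, π a probability mass function on Θ, and (P_θ)_{θ∈Θ} a family of probability mass functions on X. For any n ≥ 1, Σ_{x ∈ X^n} ( Σ_{θ∈Θ} π(θ)·∏_{t=1}^{n} P_θ(x_t) )² / ∏_{t=1}^{n} Q(x_t) = Σ_{θ, θ' ∈ Θ} π(θ)·π(θ')·( Σ_{x∈X} P_θ(x)·P_{θ'}(x)/Q(x) )^n. Equivalently, the chi-squared divergence of the mixture of n-fold products Σ_θ π(θ)·P_θ^{⊗n} from Q^{⊗n} plus 1 equals E_{θ,θ'}[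 (∫ P_θ P_{θ'}/Q)^n ] for θ, θ' drawn independently from π. -/
/-! Squaring the mixture and dividing by the product density turns each summand into a double sum
over pairs `(θ, θ')` of products `∏ t, P θ (x t) * P θ' (x t) / Q (x t)`. Summed over `X^n`, such a
product factorises into the `n`-th power of the single-letter sum. Since `∏ (f / q) = ∏ f / ∏ q`
holds even when some `q t = 0` (where `a / 0 = 0`), every step is a field identity. -/

open Finset

section Semifield

variable {K : Type*} [Semifield K]

lemma sq_sum_div_eq_sum_sum {ι : Type*} (s : Finset ι) (a : ι → K) (c : K) :
    (∑ i ∈ s, a i) ^ 2 / c = ∑ i ∈ s, ∑ j ∈ s, a i * a j / c := by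
  simp_rw [sq, sum_mul_sum, sum_div]

lemma mul_prod_mul_mul_prod_div_prod {ι : Type*} (s : Finset ι) (a b : K) (f g q : ι → K) :
    a * (∏ t ∈ s, f t) * (b * ∏ t ∈ s, g t) / ∏ t ∈ s, q t
      = a * b * ∏ t ∈ s, f t * g t / q t := by
  rw [prod_div_distrib, prod_mul_distrib, mul_div_assoc, mul_div_assoc]
  ring

end Semifield

theorem stmt14_general {X Θ : Type*} [Fintype X] [Fintype Θ]
    (Q : X → ℝ) (π : Θ → ℝ) (P : Θ → X → ℝ) (n : ℕ) :
    ∑ x : Fin n → X, (∑ θ, π θ * ∏ t, P θ (x t)) ^ 2 / ∏ t, Q (x t)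
      = ∑ θ, ∑ θ', π θ * π θ' * (∑ x, P θ x * P θ' x / Q x) ^ n := by
  calc ∑ x : Fin n → X, (∑ θ, π θ * ∏ t, P θ (x t)) ^ 2 / ∏ t, Q (x t)
      = ∑ x : Fin n → X, ∑ θ, ∑ θ', π θ * π θ' * ∏ t, P θ (x t) * P θ' (x t) / Q (x t) := by
        simp_rw [sq_sum_div_eq_sum_sum, mul_prod_mul_mul_prod_div_prod]
    _ = ∑ θ, ∑ θ', π θ * π θ' * ∑ x : Fin n → X, ∏ t, P θ (x t) * P θ' (x t) / Q (x t) := by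
        simp_rw [mul_sum]
        rw [sum_comm]
        exact sum_congr rfl fun θ _ => sum_comm
    _ = ∑ θ, ∑ θ', π θ * π θ' * (∑ x, P θ x * P θ' x / Q x) ^ n := by
        simp_rw [Fintype.sum_pow]

/-- Let `X` be a finite set, `Q` a probability mass function on `X` with
`Q(x) > 0` for all `x`, `Θ` a finite set, `π` a probability mass function on `Θ`, and
`(P_θ)_{θ∈Θ}` a family of probability mass functions on `X`. For any `n ≥ 1`,
`Σ_{x ∈ X^n} (Σ_θ π(θ)·∏_t P_θ(x_t))² / ∏_t Q(x_t)
  = Σ_{θ,θ'} π(θ)·π(θ')·(Σ_x P_θ(x)·P_{θ'}(x)/Q(x))^n`;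
equivalently, `χ²(Σ_θ π(θ)·P_θ^{⊗n} ‖ Q^{⊗n}) + 1 = E_{θ,θ'}[(∫ P_θ P_{θ'}/Q)^n]`. -/
theorem stmt14 {X Θ : Type*} [Fintype X] [Fintype Θ]
    (Q : X → ℝ) (hQpos : ∀ x, 0 < Q x) (hQ1 : ∑ x, Q x = 1)
    (π : Θ → ℝ) (hπ : ∀ θ, 0 ≤ π θ) (hπ1 : ∑ θ, π θ = 1)
    (P : Θ → X → ℝ) (hP : ∀ θ x, 0 ≤ P θ x) (hP1 : ∀ θ, ∑ x, P θ x = 1)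
    (n : ℕ) (hn : 1 ≤ n) :
    ∑ x : Fin n → X, (∑ θ, π θ * ∏ t, P θ (x t)) ^ 2 / ∏ t, Q (x t)
      = ∑ θ, ∑ θ', π θ * π θ' * (∑ x, P θ x * P θ' x / Q x) ^ n :=
  stmt14_general Q π P n
end

section
/- Let P be a probability mass function on a countable set whose every nonzero mass is at least 1/ℓ (so its support size S satisfies S ≤ ℓ). Draw k i.i.d. samples from P and let C be the number of distinct values observed. Then for every integer Δ ≥ 1, P( S − C ≥ Δ ) ≤ binom(ℓ, Δ)·(1 − Δ/ℓ)^k. -/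
/-!
If `S − C ≥ Δ`, then some `Δ`-element subset `T` of the support is missed by every sample. Each
point of `T` has mass at least `1/ℓ`, so a single sample misses `T` with probability at most
`1 − Δ/ℓ`, and all `k` samples with probability at most `(1 − Δ/ℓ)^k`. A union bound over the
`binom(S, Δ) ≤ binom(ℓ, Δ)` choices of `T` concludes.
-/

open Finset MeasureTheory
open scoped ENNReal

namespace PMF

variable {α : Type*} (p : PMF α) {ℓ : ℕ}

theorem support_eq_setOf_le_of_forall_ne_zero_le (hmin : ∀ a, p a ≠ 0 → (1 : ℝ≥0∞) / ℓ ≤ p a) :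
    p.support = {a | (1 : ℝ≥0∞) / ℓ ≤ p a} := by
  have hpos : (1 : ℝ≥0∞) / ℓ ≠ 0 := by simp
  ext a
  exact ⟨hmin a, fun h h0 => hpos (le_antisymm (h0 ▸ h) zero_le)⟩

theorem support_finite_and_ncard_le_of_forall_ne_zero_le
    (hmin : ∀ a, p a ≠ 0 → (1 : ℝ≥0∞) / ℓ ≤ p a) :
    p.support.Finite ∧ p.support.ncard ≤ ℓ := by
  obtain ⟨hfin, hcard⟩ := ENNReal.finset_card_const_le_le_of_tsum_le (a := ⇑p)
    ENNReal.one_ne_top p.tsum_coe.le (by simp : (1 : ℝ≥0∞) / ℓ ≠ 0)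
  rw [p.support_eq_setOf_le_of_forall_ne_zero_le hmin, Set.ncard_eq_toFinset_card _ hfin]
  have hinv : (1 : ℝ≥0∞) / (1 / ℓ) = ℓ := by simp
  exact ⟨hfin, by exact_mod_cast hcard.trans_eq hinv⟩

theorem div_le_toMeasure_of_subset_support [MeasurableSpace α] [MeasurableSingletonClass α]
    (hmin : ∀ a, p a ≠ 0 → (1 : ℝ≥0∞) / ℓ ≤ p a) {T : Finset α} (hT : ↑T ⊆ p.support) :
    (#T : ℝ≥0∞) / ℓ ≤ p.toMeasure T := by
  rw [PMF.toMeasure_apply_finset, div_eq_mul_inv, ← one_div, ← nsmul_eq_mul, ← sum_const]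
  exact sum_le_sum fun a ha => hmin a (hT ha)

end PMF

theorem Finset.exists_mem_powersetCard_disjoint {α : Type*} [DecidableEq α] {F R : Finset α}
    {Δ : ℕ} (h : Δ + #R ≤ #F) : ∃ T ∈ F.powersetCard Δ, Disjoint T R := by
  obtain ⟨T, hT, hTcard⟩ :=
    exists_subset_card_eq ((by omega : Δ ≤ #F - #R).trans (le_card_sdiff R F))
  exact ⟨T, mem_powersetCard.2 ⟨hT.trans sdiff_subset, hTcard⟩,
    disjoint_of_subset_left hT sdiff_disjoint⟩

theorem setOf_le_ncard_sub_ncard_range_subset {ι α : Type*} [Finite ι] (F : Finset α) (Δ : ℕ) :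
    {x : ι → α | (Δ : ℤ) ≤ (#F : ℤ) - ((Set.range x).ncard : ℤ)}
      ⊆ ⋃ T ∈ F.powersetCard Δ, Set.univ.pi fun _ : ι => (↑T : Set α)ᶜ := by
  classical
  intro x hx
  have hr := Set.finite_range x
  rw [Set.mem_ofPred_eq, Set.ncard_eq_toFinset_card _ hr] at hx
  obtain ⟨T, hT, hdisj⟩ :=
    exists_mem_powersetCard_disjoint (F := F) (R := hr.toFinset) (Δ := Δ) (by omega)
  refine Set.mem_biUnion hT fun i _ hi => disjoint_left.1 hdisj hi ?_
  simp

theorem measure_pi_biUnion_powersetCard_pi_compl_le {ι α : Type*} [Fintype ι]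
    [MeasurableSpace α] [MeasurableSingletonClass α] (μ : Measure α) [IsProbabilityMeasure μ]
    (F : Finset α) (Δ : ℕ) {c : ℝ≥0∞} (hc : ∀ T ∈ F.powersetCard Δ, c ≤ μ T) :
    Measure.pi (fun _ : ι => μ) (⋃ T ∈ F.powersetCard Δ, Set.univ.pi fun _ : ι => (↑T : Set α)ᶜ)
      ≤ (#F).choose Δ * (1 - c) ^ Fintype.card ι := by
  have hpiece : ∀ T ∈ F.powersetCard Δ,
      Measure.pi (fun _ : ι => μ) (Set.univ.pi fun _ : ι => (↑T : Set α)ᶜ)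
        ≤ (1 - c) ^ Fintype.card ι := by
    intro T hT
    rw [Measure.pi_pi, prod_const, card_univ, prob_compl_eq_one_sub T.measurableSet]
    exact pow_le_pow_left' (tsub_le_tsub_left (hc T hT) 1) _
  calc _ ≤ ∑ T ∈ F.powersetCard Δ,
          Measure.pi (fun _ : ι => μ) (Set.univ.pi fun _ : ι => (↑T : Set α)ᶜ) :=
        measure_biUnion_finset_le _ _
    _ ≤ #(F.powersetCard Δ) • (1 - c) ^ Fintype.card ι := sum_le_card_nsmul _ _ _ hpiece
    _ = (#F).choose Δ * (1 - c) ^ Fintype.card ι := by rw [card_powersetCard, nsmul_eq_mul]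

theorem stmt15_general {α : Type*} [MeasurableSpace α] [MeasurableSingletonClass α]
    (p : PMF α) (ℓ : ℕ)
    (hmin : ∀ a, p a ≠ 0 → (1 : ℝ≥0∞) / ℓ ≤ p a)
    (k Δ : ℕ) :
    Measure.pi (fun _ : Fin k => p.toMeasure)
        {x : Fin k → α | (Δ : ℤ) ≤ (p.support.ncard : ℤ) - ((Set.range x).ncard : ℤ)}
      ≤ (ℓ.choose Δ : ℝ≥0∞) * (1 - (Δ : ℝ≥0∞) / ℓ) ^ k := by
  obtain ⟨hfin, hcard⟩ := p.support_finite_and_ncard_le_of_forall_ne_zero_le hmin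
  set F := hfin.toFinset
  have hF : p.support.ncard = #F := Set.ncard_eq_toFinset_card _ hfin
  have hmass : ∀ T ∈ F.powersetCard Δ, (Δ : ℝ≥0∞) / ℓ ≤ p.toMeasure T := by
    intro T hT
    obtain ⟨hTF, rfl⟩ := mem_powersetCard.1 hT
    exact p.div_le_toMeasure_of_subset_support hmin fun a ha => hfin.mem_toFinset.1 (hTF ha)
  calc _ ≤ Measure.pi (fun _ : Fin k => p.toMeasure)
          (⋃ T ∈ F.powersetCard Δ, Set.univ.pi fun _ : Fin k => (↑T : Set α)ᶜ) :=
        measure_mono (hF ▸ setOf_le_ncard_sub_ncard_range_subset F Δ)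
    _ ≤ (#F).choose Δ * (1 - (Δ : ℝ≥0∞) / ℓ) ^ Fintype.card (Fin k) :=
        measure_pi_biUnion_powersetCard_pi_compl_le _ F Δ hmass
    _ ≤ ℓ.choose Δ * (1 - (Δ : ℝ≥0∞) / ℓ) ^ k := by
        rw [Fintype.card_fin]
        gcongr
        exact hF ▸ hcard

/-- Let `p` be a probability mass function on a countable set whose every
nonzero mass is at least `1/ℓ` (so the support size `S` satisfies `S ≤ ℓ`). Draw `k` i.i.d.
samples from `p` and let `C` be the number of distinct values observed. Then for every
integer `Δ ≥ 1`, `P(S − C ≥ Δ) ≤ binom(ℓ,Δ)·(1 − Δ/ℓ)^k`. -/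
theorem stmt15 {α : Type*} [Countable α] [MeasurableSpace α] [MeasurableSingletonClass α]
    (p : PMF α) (ℓ : ℕ) (hℓ : 1 ≤ ℓ)
    (hmin : ∀ a, p a ≠ 0 → (1 : ℝ≥0∞) / ℓ ≤ p a)
    (k Δ : ℕ) (hΔ : 1 ≤ Δ) :
    Measure.pi (fun _ : Fin k => p.toMeasure)
        {x : Fin k → α | (Δ : ℤ) ≤ (p.support.ncard : ℤ) - ((Set.range x).ncard : ℤ)}
      ≤ (ℓ.choose Δ : ℝ≥0∞) * (1 - (Δ : ℝ≥0∞) / ℓ) ^ k :=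
  stmt15_general p ℓ hmin k Δ
end
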